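/- arXiv:1203.4535 — 8 statements merged into one kernel-verified Lean document; each statement's English description precedes it below -/
import Mathlib

section
/- Let X and Y be metric spaces, and suppose X is L-bi-Lipschitz homogeneous: for every pair of points x,y ∈ X there is an L-bi-Lipschitz self-homeomorphism of X mapping x to y. If f : X → Y is an η-quasihomogeneous homeomorphism onto Y, then Y is L'-bi-Lipschitz homogeneous with L' = max(η(L), 1/η⁻¹(1/L)) (in particular, uniformly bi-Lipschitz homogeneous with constant depending only on L and η). -/
open Set

/-- If `X` is `L`-bi-Lipschitz homogeneous and `f : X → Y` is an
`η`-quasihomogeneous homeomorphism onto `Y`, then `Y` is `L'`-bi-Lipschitz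
homogeneous with `L' = max(η(L), 1/η⁻¹(1/L))`. -/
theorem quasihomogeneous_image_biLipschitz_homogeneous
    {X Y : Type*} [MetricSpace X] [MetricSpace Y]
    (η ηinv : ℝ → ℝ)
    (hη_mono : StrictMonoOn η (Ici 0))
    (hη_nonneg : ∀ t ∈ Ici (0 : ℝ), 0 ≤ η t)
    (hη_pos : ∀ t : ℝ, 0 < t → 0 < η t)
    (hinv_left : ∀ t ∈ Ici (0 : ℝ), ηinv (η t) = t)
    (hinv_right : ∀ t ∈ Ici (0 : ℝ), η (ηinv t) = t)
    (L : ℝ) (hL : 1 ≤ L)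
    (hhom : ∀ x y : X, ∃ g : X → X, Function.Bijective g ∧ g x = y ∧
      ∀ u v : X, L⁻¹ * dist u v ≤ dist (g u) (g v) ∧ dist (g u) (g v) ≤ L * dist u v)
    (f : X → Y) (hf : Function.Bijective f)
    (hf_cont : Continuous f)
    (hqh : ∀ x y z w : X, x ≠ y → z ≠ w →
      dist (f x) (f y) / dist (f z) (f w) ≤ η (dist x y / dist z w)) :
    ∀ a b : Y, ∃ g : Y → Y, Function.Bijective g ∧ g a = b ∧
      ∀ u v : Y,
        (max (η L) (1 / ηinv (1 / L)))⁻¹ * dist u v ≤ dist (g u) (g v) ∧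
          dist (g u) (g v) ≤ max (η L) (1 / ηinv (1 / L)) * dist u v := by
  intro a b
  set M : ℝ := max (η L) (1 / ηinv (1 / L)) with hM
  have hL0 : (0 : ℝ) < L := lt_of_lt_of_le one_pos hL
  have hηL_pos : 0 < η L := hη_pos L hL0
  have hηLM : η L ≤ M := le_max_left _ _
  have hM_pos : 0 < M := lt_of_lt_of_le hηL_pos hηLM
  set e := Equiv.ofBijective f hf with he
  obtain ⟨g, hg_bij, hg_map, hg_lip⟩ := hhom (e.symm a) (e.symm b)
  set eg := Equiv.ofBijective g hg_bij with heg
  refine ⟨fun y => f (g (e.symm y)), ?_, ?_, ?_⟩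
  · exact (((e.symm.trans eg).trans e) : Y ≃ Y).bijective
  · show f (g (e.symm a)) = b
    rw [hg_map]
    exact e.apply_symm_apply b
  · intro u v
    by_cases huv : u = v
    · subst huv; simp [hM_pos.le]
    set z := e.symm u with hz
    set w := e.symm v with hw
    have hzw : z ≠ w := fun h => huv (by rw [hz, hw] at h; exact e.symm.injective.eq_iff.mp h)
    have hgzw : g z ≠ g w := fun h => hzw (hg_bij.injective h)
    have hdzw : 0 < dist z w := dist_pos.mpr hzw
    have hdgzw : 0 < dist (g z) (g w) := dist_pos.mpr hgzw
    have hfz : f z = u := e.apply_symm_apply u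
    have hfw : f w = v := e.apply_symm_apply v
    have hduv : 0 < dist u v := dist_pos.mpr huv
    have hmono := hη_mono.monotoneOn
    -- upper bound
    have h1 : dist (f (g z)) (f (g w)) / dist u v ≤ η L := by
      have := hqh (g z) (g w) z w hgzw hzw
      rw [hfz, hfw] at this
      refine this.trans (hmono ?_ ?_ ?_)
      · exact mem_Ici.mpr (div_nonneg dist_nonneg dist_nonneg)
      · exact mem_Ici.mpr hL0.le
      · rw [div_le_iff₀ hdzw]; exact (hg_lip z w).2
    have hupper : dist (f (g z)) (f (g w)) ≤ M * dist u v := by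
      calc dist (f (g z)) (f (g w)) ≤ η L * dist u v := (div_le_iff₀ hduv).mp h1
        _ ≤ M * dist u v := by nlinarith
    -- lower bound
    have h2 : dist u v / dist (f (g z)) (f (g w)) ≤ η L := by
      have := hqh z w (g z) (g w) hzw hgzw
      rw [hfz, hfw] at this
      refine this.trans (hmono ?_ ?_ ?_)
      · exact mem_Ici.mpr (div_nonneg dist_nonneg dist_nonneg)
      · exact mem_Ici.mpr hL0.le
      · rw [div_le_iff₀ hdgzw]
        have := (hg_lip z w).1
        rw [inv_mul_le_iff₀ hL0] at this
        linarith
    have hdfg : 0 < dist (f (g z)) (f (g w)) :=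
      dist_pos.mpr (fun h => hgzw (hf.injective h))
    have hlower : M⁻¹ * dist u v ≤ dist (f (g z)) (f (g w)) := by
      have h3 : dist u v ≤ η L * dist (f (g z)) (f (g w)) := (div_le_iff₀ hdfg).mp h2
      rw [inv_mul_le_iff₀ hM_pos]
      nlinarith
    exact ⟨hlower, hupper⟩
end

section
/- Let X be a metric space, h : ℝ² → X a quasihomogeneous homeomorphism. Then X is uniformly bi-Lipschitz homogeneous with respect to a group: the group G = {h ∘ τ ∘ h⁻¹ : τ a translation of ℝ²} acts transitively on X by uniformly bi-Lipschitz homeomorphisms, with bi-Lipschitz constant depending only on the quasihomogeneity function η of h. -/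
open Set

/-- If `h : ℝ² → X` is a quasihomogeneous homeomorphism, then `X` is uniformly
bi-Lipschitz homogeneous with respect to the group
`G = {h ∘ τ ∘ h⁻¹ : τ a translation of ℝ²}`: every such conjugated translation
is `L`-bi-Lipschitz for a uniform `L` (depending only on `η`), and this family
acts transitively on `X`. -/
theorem quasihomogeneous_parametrization_gives_group_homogeneity
    {X : Type*} [MetricSpace X]
    (η : ℝ → ℝ)
    (hη_mono : StrictMonoOn η (Ici 0))
    (hη_pos : ∀ t : ℝ, 0 < t → 0 < η t)
    (h : EuclideanSpace ℝ (Fin 2) ≃ₜ X)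
    (hqh : ∀ x y z w : EuclideanSpace ℝ (Fin 2), x ≠ y → z ≠ w →
      dist (h x) (h y) / dist (h z) (h w) ≤ η (dist x y / dist z w)) :
    ∃ L : ℝ, 1 ≤ L ∧
      (∀ v : EuclideanSpace ℝ (Fin 2), ∀ a b : X,
        L⁻¹ * dist a b ≤ dist (h (h.symm a + v)) (h (h.symm b + v)) ∧
          dist (h (h.symm a + v)) (h (h.symm b + v)) ≤ L * dist a b) ∧
      (∀ a b : X, ∃ v : EuclideanSpace ℝ (Fin 2), h (h.symm a + v) = b) := by
  have hη1 : 0 < η 1 := hη_pos 1 one_pos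
  refine ⟨max 1 (η 1), le_max_left _ _, ?_, ?_⟩
  · intro v a b
    by_cases hab : a = b
    · subst hab
      simp
    have hxy : h.symm a ≠ h.symm b := fun H => hab (by
      have := congrArg h H; simpa using this)
    have hxyv : h.symm a + v ≠ h.symm b + v := by
      simpa using hxy
    have hdist_eq : dist (h.symm a + v) (h.symm b + v) = dist (h.symm a) (h.symm b) :=
      dist_add_right _ _ _
    have hab' : dist a b = dist (h (h.symm a)) (h (h.symm b)) := by simp
    have hpos1 : 0 < dist a b := dist_pos.mpr hab
    have hinjv : h (h.symm a + v) ≠ h (h.symm b + v) := fun H =>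
      hxyv (h.injective H)
    have hpos2 : 0 < dist (h (h.symm a + v)) (h (h.symm b + v)) := dist_pos.mpr hinjv
    constructor
    · -- lower bound
      have := hqh (h.symm a) (h.symm b) (h.symm a + v) (h.symm b + v) hxy hxyv
      rw [hdist_eq, div_self (dist_ne_zero.mpr hxy)] at this
      have h2 : dist (h (h.symm a)) (h (h.symm b)) ≤
          η 1 * dist (h (h.symm a + v)) (h (h.symm b + v)) :=
        (div_le_iff₀ hpos2).mp this
      rw [← hab'] at h2
      have h3 : (η 1)⁻¹ * dist a b ≤ dist (h (h.symm a + v)) (h (h.symm b + v)) := by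
        rw [inv_mul_le_iff₀ hη1]; linarith
      calc (max 1 (η 1))⁻¹ * dist a b ≤ (η 1)⁻¹ * dist a b := by
            apply mul_le_mul_of_nonneg_right _ hpos1.le
            exact inv_anti₀ hη1 (le_max_right _ _)
        _ ≤ _ := h3
    · -- upper bound
      have := hqh (h.symm a + v) (h.symm b + v) (h.symm a) (h.symm b) hxyv hxy
      rw [hdist_eq, div_self (dist_ne_zero.mpr hxy)] at this
      have hposab : 0 < dist (h (h.symm a)) (h (h.symm b)) := by
        rw [← hab']; exact hpos1
      have h2 : dist (h (h.symm a + v)) (h (h.symm b + v)) ≤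
          η 1 * dist (h (h.symm a)) (h (h.symm b)) :=
        (div_le_iff₀ hposab).mp this
      rw [← hab'] at h2
      calc dist (h (h.symm a + v)) (h (h.symm b + v)) ≤ η 1 * dist a b := h2
        _ ≤ max 1 (η 1) * dist a b :=
            mul_le_mul_of_nonneg_right (le_max_right _ _) hpos1.le
  · intro a b
    refine ⟨h.symm b - h.symm a, ?_⟩
    simp
end

section
/- Let μ be a doubling Borel measure on ℝⁿ: there is D ≥ 1 with μ(B(x;2r)) ≤ D μ(B(x;r)) for all x, r > 0, and μ is nontrivial. Define δ_μ(x,y) := μ(B(x;|x−y|) ∪ B(y;|x−y|))^{1/n}. Then δ_μ is a quasidistance: it is symmetric, vanishes exactly on the diagonal, and there exists K ≥ 1 (depending only on D) with δ_μ(x,z) ≤ K(δ_μ(x,y) + δ_μ(y,z)) for all x,y,z ∈ ℝⁿ. -/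
open Metric MeasureTheory
open scoped ENNReal

/-- If `μ` is a nontrivial doubling measure on `ℝⁿ`, then
`δ_μ(x,y) := μ(B(x;|x−y|) ∪ B(y;|x−y|))^{1/n}` is a quasidistance: symmetric,
vanishing exactly on the diagonal, and satisfying a weak triangle inequality
with a multiplicative constant `K` depending only on the doubling constant. -/
theorem quasidistance_of_doubling_measure
    (n : ℕ) (hn : 0 < n)
    (μ : Measure (EuclideanSpace ℝ (Fin n)))
    (D : ℝ≥0∞) (hD : 1 ≤ D) (hDfin : D ≠ ∞)
    (hdbl : ∀ (x : EuclideanSpace ℝ (Fin n)) (r : ℝ), 0 < r →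
      μ (ball x (2 * r)) ≤ D * μ (ball x r))
    (hpos : ∀ (x : EuclideanSpace ℝ (Fin n)) (r : ℝ), 0 < r → 0 < μ (ball x r))
    (hfin : ∀ (x : EuclideanSpace ℝ (Fin n)) (r : ℝ), μ (ball x r) < ∞) :
    let δ : EuclideanSpace ℝ (Fin n) → EuclideanSpace ℝ (Fin n) → ℝ :=
      fun x y => (μ (ball x (dist x y) ∪ ball y (dist x y))).toReal ^ ((n : ℝ)⁻¹)
    (∀ x y, δ x y = δ y x) ∧
    (∀ x y, δ x y = 0 ↔ x = y) ∧
    (∃ K : ℝ, 1 ≤ K ∧ ∀ x y z, δ x z ≤ K * (δ x y + δ y z)) := by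
  intro δ
  have hninv : (0:ℝ) < (n:ℝ)⁻¹ := by positivity
  have hδnonneg : ∀ x y, 0 ≤ δ x y := fun x y => Real.rpow_nonneg ENNReal.toReal_nonneg _
  have hUfin : ∀ (x y : EuclideanSpace ℝ (Fin n)) (r : ℝ),
      μ (ball x r ∪ ball y r) < ∞ := fun x y r =>
    lt_of_le_of_lt (measure_union_le _ _) (ENNReal.add_lt_top.mpr ⟨hfin x r, hfin y r⟩)
  have hδself : ∀ x, δ x x = 0 := by
    intro x
    have : δ x x = ((μ : Measure _) (∅ ∪ ∅)).toReal ^ ((n:ℝ)⁻¹) := by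
      simp only [δ, dist_self, ball_zero]
    rw [this]
    simp [Real.zero_rpow hninv.ne']
  have hδpos : ∀ x y, x ≠ y → 0 < δ x y := by
    intro x y hxy
    have hd : 0 < dist x y := dist_pos.mpr hxy
    have h1 : 0 < μ (ball x (dist x y) ∪ ball y (dist x y)) :=
      lt_of_lt_of_le (hpos x _ hd) (measure_mono Set.subset_union_left)
    exact Real.rpow_pos_of_pos (ENNReal.toReal_pos h1.ne' (hUfin x y _).ne) _
  refine ⟨?_, ?_, ?_⟩
  · intro x y
    simp only [δ, dist_comm x y, Set.union_comm]
  · intro x y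
    constructor
    · intro h
      by_contra hxy
      exact absurd h (hδpos x y hxy).ne'
    · rintro rfl; exact hδself x
  · have hDr1 : (1:ℝ) ≤ D.toReal := by
      have := ENNReal.toReal_mono hDfin hD
      simpa using this
    set Dr := D.toReal with hDrdef
    refine ⟨(Dr ^ 3) ^ ((n:ℝ)⁻¹), ?_, ?_⟩
    · calc (1:ℝ) = 1 ^ ((n:ℝ)⁻¹) := (Real.one_rpow _).symm
        _ ≤ (Dr ^ 3) ^ ((n:ℝ)⁻¹) :=
          Real.rpow_le_rpow zero_le_one (one_le_pow₀ hDr1) hninv.le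
    · intro x y z
      set K := (Dr ^ 3) ^ ((n:ℝ)⁻¹) with hK
      have hK1 : (1:ℝ) ≤ K := by
        calc (1:ℝ) = 1 ^ ((n:ℝ)⁻¹) := (Real.one_rpow _).symm
          _ ≤ (Dr ^ 3) ^ ((n:ℝ)⁻¹) :=
            Real.rpow_le_rpow zero_le_one (one_le_pow₀ hDr1) hninv.le
      by_cases hxz : x = z
      · subst hxz
        rw [hδself]
        positivity
      by_cases hxy : x = y
      · subst hxy
        rw [hδself, zero_add]
        nlinarith [hδnonneg x z, hK1]
      by_cases hyz : y = z
      · subst hyz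
        rw [hδself, add_zero]
        nlinarith [hδnonneg x y, hK1]
      -- main case
      have hr1 : 0 < dist x y := dist_pos.mpr hxy
      have hr2 : 0 < dist y z := dist_pos.mpr hyz
      have hr : 0 < dist x z := dist_pos.mpr hxz
      set r1 := dist x y
      set r2 := dist y z
      set r := dist x z
      set m := max r1 r2 with hm
      have hm0 : 0 < m := lt_max_of_lt_left hr1
      have hrm : r ≤ 2 * m := by
        have := dist_triangle x y z
        have h1 : r1 ≤ m := le_max_left _ _
        have h2 : r2 ≤ m := le_max_right _ _
        simp only [r, r1, r2] at *
        linarith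
      -- union ⊆ ball x (4m)
      have hsub : ball x r ∪ ball z r ⊆ ball x (2 * (2 * m)) := by
        apply Set.union_subset
        · exact ball_subset_ball (by linarith)
        · apply ball_subset_ball'
          have : dist z x = r := by rw [dist_comm]
          rw [this]; linarith
      have hbig : μ (ball x r ∪ ball z r) ≤ D * (D * μ (ball x m)) :=
        calc μ (ball x r ∪ ball z r) ≤ μ (ball x (2 * (2 * m))) := measure_mono hsub
          _ ≤ D * μ (ball x (2 * m)) := hdbl x _ (by linarith)
          _ ≤ D * (D * μ (ball x m)) := mul_le_mul_right (hdbl x m hm0) D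
      -- key: μ (ball x m) ≤ D * μ (U) for U one of the two unions
      have hkey : μ (ball x r ∪ ball z r) ≤ D ^ 3 * μ (ball x r1 ∪ ball y r1) ∨
          μ (ball x r ∪ ball z r) ≤ D ^ 3 * μ (ball y r2 ∪ ball z r2) := by
        rcases le_total r2 r1 with h | h
        · left
          have hm' : m = r1 := max_eq_left h
          have h1 : μ (ball x m) ≤ μ (ball x r1 ∪ ball y r1) := by
            rw [hm']; exact measure_mono Set.subset_union_left
          calc μ (ball x r ∪ ball z r) ≤ D * (D * μ (ball x m)) := hbig
            _ ≤ D * (D * (D * μ (ball x r1 ∪ ball y r1))) := by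
                refine mul_le_mul_right (mul_le_mul_right ?_ D) D
                exact h1.trans (le_mul_of_one_le_left (zero_le (a := _)) hD)
            _ = D ^ 3 * μ (ball x r1 ∪ ball y r1) := by ring
        · right
          have hm' : m = r2 := max_eq_right h
          have h1 : μ (ball x m) ≤ D * μ (ball y r2 ∪ ball z r2) := by
            rw [hm']
            have hsub2 : ball x r2 ⊆ ball y (2 * r2) := by
              apply ball_subset_ball'
              have : dist x y = r1 := rfl
              rw [this]; linarith
            calc μ (ball x r2) ≤ μ (ball y (2 * r2)) := measure_mono hsub2
              _ ≤ D * μ (ball y r2) := hdbl y r2 hr2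
              _ ≤ D * μ (ball y r2 ∪ ball z r2) :=
                mul_le_mul_right (measure_mono Set.subset_union_left) D
          calc μ (ball x r ∪ ball z r) ≤ D * (D * μ (ball x m)) := hbig
            _ ≤ D * (D * (D * μ (ball y r2 ∪ ball z r2))) :=
                mul_le_mul_right (mul_le_mul_right h1 D) D
            _ = D ^ 3 * μ (ball y r2 ∪ ball z r2) := by ring
      -- generic conclusion
      have hgen : ∀ (a b : EuclideanSpace ℝ (Fin n)),
          μ (ball x r ∪ ball z r) ≤ D ^ 3 * μ (ball a (dist a b) ∪ ball b (dist a b)) →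
          δ x z ≤ K * δ a b := by
        intro a b hab
        have hfinR : D ^ 3 * μ (ball a (dist a b) ∪ ball b (dist a b)) ≠ ∞ :=
          ENNReal.mul_ne_top (ENNReal.pow_ne_top hDfin) (hUfin a b _).ne
        have htr : (μ (ball x r ∪ ball z r)).toReal ≤
            Dr ^ 3 * (μ (ball a (dist a b) ∪ ball b (dist a b))).toReal := by
          have := ENNReal.toReal_mono hfinR hab
          rwa [ENNReal.toReal_mul, ENNReal.toReal_pow] at this
        calc δ x z ≤ (Dr ^ 3 * (μ (ball a (dist a b) ∪ ball b (dist a b))).toReal)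
              ^ ((n:ℝ)⁻¹) :=
            Real.rpow_le_rpow ENNReal.toReal_nonneg htr hninv.le
          _ = K * δ a b := by
            rw [Real.mul_rpow (by positivity) ENNReal.toReal_nonneg]
      rcases hkey with h | h
      · have := hgen x y h
        nlinarith [hδnonneg y z, hK1, hδnonneg x y]
      · have := hgen y z h
        nlinarith [hδnonneg x y, hK1, hδnonneg y z]
end

section
/- Let X be an Ahlfors n-regular metric space and f : ℝⁿ → X an η-quasihomogeneous homeomorphism. Then f is bi-Lipschitz, with bi-Lipschitz constant depending only on η and the regularity constant of X. -/
open Metric MeasureTheory Set Filter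
open scoped ENNReal

/-- Coordinate bound in Euclidean space. -/
lemma euclid_coord_le_dist {n : ℕ} (x y : EuclideanSpace ℝ (Fin n)) (i : Fin n) :
    |x i - y i| ≤ dist x y := by
  rw [EuclideanSpace.dist_eq]
  have h1 : |x i - y i| = Real.sqrt ((x i - y i) ^ 2) := (Real.sqrt_sq_eq_abs _).symm
  rw [h1]
  apply Real.sqrt_le_sqrt
  have := Finset.single_le_sum (f := fun j => dist (x j) (y j) ^ 2)
    (fun j _ => sq_nonneg _) (Finset.mem_univ i)
  simpa [Real.dist_eq] using this

/-- Norm bound in Euclidean space via coordinatewise bound. -/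
lemma euclid_norm_le {n : ℕ} (x : EuclideanSpace ℝ (Fin n)) (M : ℝ) (hM : 0 ≤ M)
    (h : ∀ i, |x i| ≤ M) : ‖x‖ ≤ Real.sqrt n * M := by
  rw [EuclideanSpace.norm_eq]
  have : ∑ i : Fin n, ‖x i‖ ^ 2 ≤ ∑ _i : Fin n, M ^ 2 := by
    apply Finset.sum_le_sum
    intro i _
    have := h i
    have : ‖x i‖ ≤ M := by simpa [Real.norm_eq_abs] using h i
    exact pow_le_pow_left₀ (norm_nonneg _) this 2
  calc Real.sqrt (∑ i : Fin n, ‖x i‖ ^ 2) ≤ Real.sqrt (∑ _i : Fin n, M ^ 2) :=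
        Real.sqrt_le_sqrt this
    _ = Real.sqrt (n * M ^ 2) := by simp [Finset.sum_const, mul_comm]
    _ = Real.sqrt n * M := by
        rw [Real.sqrt_mul (Nat.cast_nonneg n), Real.sqrt_sq hM]

def packPoint (n k : ℕ) (r : ℝ) (v : Fin n → Fin k) : EuclideanSpace ℝ (Fin n) :=
  WithLp.toLp 2 (fun i => 2 * r * (v i : ℝ))

@[simp] lemma packPoint_apply (n k : ℕ) (r : ℝ) (v : Fin n → Fin k) (i : Fin n) :
    packPoint n k r v i = 2 * r * (v i : ℝ) := rfl

/-- Packing lattice: `k^n` points in a box, pairwise distance `≥ 2r`, norm `≤ 2*r*k*√n`. -/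
lemma pack_lemma (n k : ℕ) (r : ℝ) (hr : 0 < r) :
    (∀ v w : Fin n → Fin k, v ≠ w → 2 * r ≤ dist (packPoint n k r v) (packPoint n k r w)) ∧
      (∀ v : Fin n → Fin k, ‖packPoint n k r v‖ ≤ Real.sqrt n * (2 * r * k)) := by
  constructor
  · intro v w hvw
    obtain ⟨i, hi⟩ := Function.ne_iff.mp hvw
    have h1 : |packPoint n k r v i - packPoint n k r w i| ≤
        dist (packPoint n k r v) (packPoint n k r w) := euclid_coord_le_dist _ _ i
    rw [packPoint_apply, packPoint_apply] at h1
    have h2 : (1 : ℝ) ≤ |(v i : ℝ) - (w i : ℝ)| := by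
      have hne : (v i : ℕ) ≠ (w i : ℕ) := fun h => hi (Fin.ext h)
      have hz : ((v i : ℤ) - (w i : ℤ)) ≠ 0 := by
        intro h
        apply hne
        omega
      have := Int.one_le_abs hz
      calc (1 : ℝ) ≤ |((v i : ℤ) - (w i : ℤ) : ℤ)| := by exact_mod_cast this
        _ = |(v i : ℝ) - (w i : ℝ)| := by push_cast; ring_nf
    calc 2 * r = 2 * r * 1 := by ring
      _ ≤ 2 * r * |(v i : ℝ) - (w i : ℝ)| := by
          apply mul_le_mul_of_nonneg_left h2 (by positivity)
      _ = |(2 * r * (v i : ℝ)) - 2 * r * (w i : ℝ)| := by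
          rw [← mul_sub, abs_mul, abs_of_pos (by positivity : (0:ℝ) < 2 * r)]
      _ ≤ _ := h1
  · intro v
    apply euclid_norm_le _ _ (by positivity)
    intro i
    rw [packPoint_apply, abs_of_nonneg (by positivity)]
    have h1 : ((v i : ℕ) : ℝ) ≤ (k : ℝ) := by exact_mod_cast le_of_lt (v i).isLt
    exact mul_le_mul_of_nonneg_left h1 (by positivity)

set_option maxHeartbeats 2000000 in
/-- Theorem (quasihomogeneous implies bi-Lipschitz): if `X` is an Ahlfors
`n`-regular metric space and `f : ℝⁿ → X` is an `η`-quasihomogeneous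
homeomorphism, then `f` is bi-Lipschitz (with constant depending only on `η`
and the regularity constant). -/
theorem quasihomogeneous_homeo_of_regular_space_is_biLipschitz
    (n : ℕ) (hn : 0 < n)
    {X : Type*} [MetricSpace X] [MeasurableSpace X] [BorelSpace X]
    (A : ℝ) (hA : 1 ≤ A)
    (hreg : ∀ (x : X) (r : ℝ), 0 < r →
      ENNReal.ofReal r ≤ EMetric.diam (Set.univ : Set X) →
        A⁻¹ * r ^ n ≤ (μH[(n : ℝ)] (ball x r)).toReal ∧
          (μH[(n : ℝ)] (ball x r)).toReal ≤ A * r ^ n)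
    (η : ℝ → ℝ)
    (hη_mono : StrictMonoOn η (Ici 0))
    (hη_zero : η 0 = 0)
    (hη_cont : ContinuousOn η (Ici 0))
    (hη_top : Tendsto η atTop atTop)
    (f : EuclideanSpace ℝ (Fin n) ≃ₜ X)
    (hqh : ∀ x y z w : EuclideanSpace ℝ (Fin n), x ≠ y → z ≠ w →
      dist (f x) (f y) / dist (f z) (f w) ≤ η (dist x y / dist z w)) :
    ∃ L : ℝ, 1 ≤ L ∧ ∀ x y : EuclideanSpace ℝ (Fin n),
      L⁻¹ * dist x y ≤ dist (f x) (f y) ∧ dist (f x) (f y) ≤ L * dist x y := by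
  set E := EuclideanSpace ℝ (Fin n) with hE
  set e : E := EuclideanSpace.single (⟨0, hn⟩ : Fin n) (1:ℝ) with he_def
  have he : ‖e‖ = 1 := by
    rw [he_def, EuclideanSpace.norm_single]; norm_num
  have hdist_smul : ∀ s t : ℝ, dist (s • e) (t • e) = |s - t| := by
    intro s t
    rw [dist_eq_norm, ← sub_smul, norm_smul, he, Real.norm_eq_abs, mul_one]
  have hdist0 : ∀ s : ℝ, 0 ≤ s → dist (0 : E) (s • e) = s := by
    intro s hs
    have h := hdist_smul 0 s
    rw [zero_smul] at h
    rw [h, abs_sub_comm, sub_zero, abs_of_nonneg hs]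
  have hsmul_ne : ∀ s t : ℝ, s ≠ t → s • e ≠ t • e := by
    intro s t hst h
    apply hst
    have := hdist_smul s t
    rw [h, dist_self] at this
    have := this.symm
    rw [abs_eq_zero, sub_eq_zero] at this
    exact this
  have hinj : Function.Injective f := f.injective
  have hfd : ∀ x y : E, x ≠ y → 0 < dist (f x) (f y) := by
    intro x y hxy
    exact dist_pos.mpr (fun h => hxy (hinj h))
  have cmp : ∀ x y z w : E, x ≠ y → z ≠ w →
      dist (f x) (f y) ≤ η (dist x y / dist z w) * dist (f z) (f w) := by
    intro x y z w hxy hzw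
    exact (div_le_iff₀ (hfd z w hzw)).mp (hqh x y z w hxy hzw)
  have hηmono : ∀ a b : ℝ, 0 ≤ a → a ≤ b → η a ≤ η b := by
    intro a b ha hab
    exact hη_mono.monotoneOn (mem_Ici.mpr ha) (mem_Ici.mpr (ha.trans hab)) hab
  have hη1 : 1 ≤ η 1 := by
    have h0 : (0:E) ≠ e := by
      intro h
      rw [← h] at he
      simp at he
    have := cmp 0 e 0 e h0 h0
    have hd := hfd 0 e h0
    rw [div_self (ne_of_gt (dist_pos.mpr h0))] at this
    nlinarith
  have hη1pos : 0 < η 1 := lt_of_lt_of_le one_pos hη1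
  have cmp1 : ∀ x y z w : E, x ≠ y → z ≠ w → dist x y ≤ dist z w →
      dist (f x) (f y) ≤ η 1 * dist (f z) (f w) := by
    intro x y z w hxy hzw hle
    refine (cmp x y z w hxy hzw).trans ?_
    apply mul_le_mul_of_nonneg_right _ (dist_nonneg)
    apply hηmono _ _ (by positivity)
    rw [div_le_one (dist_pos.mpr (fun h => hzw h))]
    exact hle
  set ψ : ℝ → ℝ := fun s => dist (f 0) (f (s • e)) with hψ_def
  have hzne : ∀ s : ℝ, 0 < s → (0 : E) ≠ s • e := by
    intro s hs h
    have := hdist0 s hs.le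
    rw [← h, dist_self] at this
    exact absurd this.symm (ne_of_gt hs)
  have hψpos : ∀ s : ℝ, 0 < s → 0 < ψ s := by
    intro s hs
    exact hfd _ _ (hzne s hs)
  have bnd1 : ∀ s : ℝ, 0 < s → ∀ x y : E, x ≠ y → dist x y ≤ s →
      dist (f x) (f y) ≤ η 1 * ψ s := by
    intro s hs x y hxy hle
    have := cmp1 x y 0 (s • e) hxy (hzne s hs) (by rwa [hdist0 s hs.le])
    exact this
  have bnd2 : ∀ s : ℝ, 0 < s → ∀ x y : E, x ≠ y → s ≤ dist x y →
      ψ s ≤ η 1 * dist (f x) (f y) := by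
    intro s hs x y hxy hle
    have := cmp1 0 (s • e) x y (hzne s hs) hxy (by rwa [hdist0 s hs.le])
    exact this
  set D : ℝ := ψ 1 with hD_def
  have hD : 0 < D := hψpos 1 one_pos
  have hηt_pos : ∀ t : ℝ, 0 < t → 0 < η t := by
    intro t ht
    have := hη_mono self_mem_Ici (mem_Ici.mpr ht.le) ht
    rwa [hη_zero] at this
  have hdiam : ∀ r : ℝ, 0 < r → ENNReal.ofReal r ≤ EMetric.diam (univ : Set X) := by
    intro r hr
    have hDr : 0 < D / r := by positivity
    have hcont : Tendsto η (nhdsWithin 0 (Ici 0)) (nhds 0) := by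
      have := hη_cont 0 self_mem_Ici
      rwa [ContinuousWithinAt, hη_zero] at this
    have hev : ∀ᶠ t in nhdsWithin 0 (Ioi (0:ℝ)), η t < D / r := by
      apply Filter.Eventually.filter_mono (nhdsWithin_mono 0 Ioi_subset_Ici_self)
      exact hcont (Iio_mem_nhds hDr)
    obtain ⟨t, hηt, ht⟩ := (hev.and eventually_mem_nhdsWithin).exists
    rw [mem_Ioi] at ht
    set s : ℝ := 1 / t with hs_def
    have hs : 0 < s := by positivity
    have hts : 1 / s = t := by rw [hs_def, one_div_one_div]
    have h1 : dist (0 : E) ((1:ℝ) • e) = 1 := hdist0 1 zero_le_one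
    have hds : dist (0 : E) (s • e) = s := hdist0 s hs.le
    have hcmp := cmp 0 ((1:ℝ) • e) 0 (s • e) (hzne 1 one_pos) (hzne s hs)
    rw [h1, hds, hts] at hcmp
    have hψs : r ≤ ψ s := by
      have hηtpos := hηt_pos t ht
      have hcmp' : D ≤ η t * ψ s := hcmp
      have h5 : η t * r < D := by
        have := mul_lt_mul_of_pos_right hηt hr
        rwa [div_mul_cancel₀ _ (ne_of_gt hr)] at this
      by_contra hc
      push_neg at hc
      have h6 : η t * ψ s < η t * r := mul_lt_mul_of_pos_left hc hηtpos
      linarith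
    calc ENNReal.ofReal r ≤ edist (f 0) (f (s • e)) := by
          rw [edist_dist]
          exact ENNReal.ofReal_le_ofReal hψs
      _ ≤ EMetric.diam (univ : Set X) :=
          EMetric.edist_le_diam_of_mem (mem_univ _) (mem_univ _)
  have hball : ∀ (x : X) (ρ : ℝ), 0 < ρ →
      A⁻¹ * ρ ^ n ≤ (μH[(n : ℝ)] (ball x ρ)).toReal ∧
        (μH[(n : ℝ)] (ball x ρ)).toReal ≤ A * ρ ^ n ∧ μH[(n : ℝ)] (ball x ρ) ≠ ⊤ := by
    intro x ρ hρ
    obtain ⟨h1, h2⟩ := hreg x ρ hρ (hdiam ρ hρ)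
    refine ⟨h1, h2, ?_⟩
    intro htop
    rw [htop] at h1
    rw [ENNReal.toReal_top] at h1
    nlinarith [pow_pos hρ n, inv_pos.mpr (lt_of_lt_of_le one_pos hA)]
  have chain : ∀ (s : ℝ) (k : ℕ), 0 < s → 1 ≤ k → ψ s ≤ k * (η 1 * ψ (s / k)) := by
    intro s k hs hk
    have hk0 : (k : ℝ) ≠ 0 := by positivity
    have hsk : 0 < s / k := by positivity
    set g : ℕ → X := fun i => f (((i : ℝ) * (s / k)) • e) with hg_def
    have hg0 : g 0 = f 0 := by simp [hg_def]
    have hgk : g k = f (s • e) := by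
      simp only [hg_def]
      congr 1
      rw [mul_div_assoc', mul_comm, mul_div_assoc, div_self hk0, mul_one]
    have hstep : ∀ i : ℕ, dist (g i) (g (i + 1)) ≤ η 1 * ψ (s / k) := by
      intro i
      have hd : dist (((i : ℝ) * (s / k)) • e) ((((i:ℕ)+1 : ℝ) * (s / k)) • e) = s / k := by
        rw [hdist_smul]
        rw [show (i : ℝ) * (s / k) - ((i:ℕ)+1 : ℝ) * (s / k) = -(s/k) by ring]
        rw [abs_neg, abs_of_pos hsk]
      have hne : ((i : ℝ) * (s / k)) • e ≠ (((i:ℕ)+1 : ℝ) * (s / k)) • e := by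
        apply hsmul_ne
        intro h
        have h2 : (i : ℝ) = ((i:ℕ)+1 : ℝ) := mul_right_cancel₀ (ne_of_gt hsk) h
        push_cast at h2
        linarith
      have := cmp1 _ _ 0 ((s/k) • e) hne (hzne _ hsk) (by rw [hd, hdist0 _ hsk.le])
      simpa [hg_def] using this
    calc ψ s = dist (g 0) (g k) := by rw [hg0, hgk]
      _ ≤ ∑ i ∈ Finset.range k, dist (g i) (g (i + 1)) := dist_le_range_sum_dist g k
      _ ≤ (Finset.range k).card • (η 1 * ψ (s / k)) :=
          Finset.sum_le_card_nsmul _ _ _ (fun i _ => hstep i)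
      _ = k * (η 1 * ψ (s / k)) := by
          rw [Finset.card_range, nsmul_eq_mul]
  have up1 : ∀ s : ℝ, 1 ≤ s → ψ s ≤ 2 * η 1 ^ 2 * D * s := by
    intro s hs
    have hs0 : 0 < s := lt_of_lt_of_le one_pos hs
    set k : ℕ := ⌈s⌉₊ with hk_def
    have hk1 : 1 ≤ k := Nat.one_le_iff_ne_zero.mpr (by
      intro h
      rw [hk_def] at h
      have := Nat.ceil_eq_zero.mp h
      linarith)
    have hks : s ≤ k := Nat.le_ceil s
    have hkub : (k : ℝ) ≤ s + 1 := le_of_lt (Nat.ceil_lt_add_one hs0.le)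
    have hsk : 0 < s / k := by positivity
    have hsk1 : s / k ≤ 1 := by
      rw [div_le_one (by positivity)]
      exact hks
    have h1 := chain s k hs0 hk1
    have h2 : ψ (s / k) ≤ η 1 * D := by
      have := cmp1 0 ((s/k) • e) 0 ((1:ℝ) • e) (hzne _ hsk) (hzne _ one_pos)
        (by rw [hdist0 _ hsk.le, hdist0 _ zero_le_one]; exact hsk1)
      exact this
    have hη1' : 0 ≤ η 1 := hη1pos.le
    calc ψ s ≤ k * (η 1 * ψ (s / k)) := h1
      _ ≤ k * (η 1 * (η 1 * D)) := by
          apply mul_le_mul_of_nonneg_left _ (by positivity)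
          exact mul_le_mul_of_nonneg_left h2 hη1'
      _ ≤ (s + 1) * (η 1 * (η 1 * D)) := by
          apply mul_le_mul_of_nonneg_right hkub (by positivity)
      _ ≤ (2 * s) * (η 1 * (η 1 * D)) := by
          apply mul_le_mul_of_nonneg_right (by linarith) (by positivity)
      _ = 2 * η 1 ^ 2 * D * s := by ring
  have low1 : ∀ s : ℝ, 0 < s → s ≤ 1 → D * s / (2 * η 1 ^ 2) ≤ ψ s := by
    intro s hs hs1
    set k : ℕ := ⌈1/s⌉₊ with hk_def
    have h1s : (1:ℝ) ≤ 1/s := by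
      rw [le_div_iff₀ hs]; linarith
    have hk1 : 1 ≤ k := by
      rw [hk_def]
      exact Nat.one_le_iff_ne_zero.mpr (by
        intro h
        have := Nat.ceil_eq_zero.mp h
        linarith)
    have hks : 1/s ≤ k := Nat.le_ceil _
    have hkub : (k : ℝ) ≤ 1/s + 1 := le_of_lt (Nat.ceil_lt_add_one (by positivity))
    have hkub2 : (k : ℝ) ≤ 2/s := by
      rw [le_div_iff₀ hs]
      have h3 : ((1:ℝ)/s + 1) * s = 1 + s := by field_simp
      nlinarith [mul_le_mul_of_nonneg_right hkub hs.le]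
    have hkpos : (0:ℝ) < k := by exact_mod_cast hk1
    have hik : 0 < 1 / (k:ℝ) := by positivity
    have h1 := chain 1 k one_pos hk1
    have h2 : ψ (1 / k) ≤ η 1 * ψ s := by
      have := cmp1 0 ((1/(k:ℝ)) • e) 0 (s • e) (hzne _ hik) (hzne _ hs)
        (by
          rw [hdist0 _ hik.le, hdist0 _ hs.le]
          rw [div_le_iff₀ hkpos]
          calc (1:ℝ) = s * (1/s) := by field_simp
            _ ≤ s * k := mul_le_mul_of_nonneg_left hks hs.le)
      exact this
    have hfinal : D ≤ k * (η 1 * (η 1 * ψ s)) := by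
      calc D = ψ 1 := hD_def
        _ ≤ k * (η 1 * ψ (1 / k)) := h1
        _ ≤ k * (η 1 * (η 1 * ψ s)) := by
            apply mul_le_mul_of_nonneg_left _ (by positivity)
            exact mul_le_mul_of_nonneg_left h2 hη1pos.le
    have hψs := hψpos s hs
    rw [div_le_iff₀ (by positivity)]
    calc D * s ≤ (k * (η 1 * (η 1 * ψ s))) * s := by
          apply mul_le_mul_of_nonneg_right hfinal hs.le
      _ ≤ ((2/s) * (η 1 * (η 1 * ψ s))) * s := by
          apply mul_le_mul_of_nonneg_right _ hs.le
          apply mul_le_mul_of_nonneg_right hkub2 (by positivity)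
      _ = ψ s * (2 * η 1 ^ 2) := by field_simp
  have hsn : (1:ℝ) ≤ Real.sqrt n := by
    rw [show (1:ℝ) = Real.sqrt 1 by simp]
    exact Real.sqrt_le_sqrt (by exact_mod_cast hn)
  have key : ∀ (r : ℝ) (k : ℕ), 0 < r → 1 ≤ k →
      (k : ℝ) * ψ r ≤ 2 * A ^ 2 * η 1 ^ 2 * ψ (3 * Real.sqrt n * k * r) := by
    intro r k hr hk
    set R : ℝ := 3 * Real.sqrt n * k * r with hR_def
    have hkR : (1:ℝ) ≤ (k:ℝ) := by exact_mod_cast hk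
    have hR : 0 < R := by
      rw [hR_def]
      positivity
    set ρ : ℝ := ψ r / η 1 with hρ_def
    have hρ : 0 < ρ := div_pos (hψpos r hr) hη1pos
    have hψR : 0 < ψ R := hψpos R hR
    obtain ⟨hsep, hnorm⟩ := pack_lemma n k r hr
    set c := packPoint n k r with hc_def
    have hdisj : Pairwise (Function.onFun Disjoint
        (fun v : Fin n → Fin k => f '' ball (c v) r)) := by
      intro v w hvw
      apply Set.disjoint_image_of_injective hinj
      exact ball_disjoint_ball (by linarith [hsep v w hvw])
    have hmeas : ∀ v : Fin n → Fin k, MeasurableSet (f '' ball (c v) r) :=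
      fun v => (f.isOpenMap _ isOpen_ball).measurableSet
    have hlow : ∀ v, ball (f (c v)) ρ ⊆ f '' ball (c v) r := by
      intro v q hq
      rw [mem_ball] at hq
      refine ⟨f.symm q, ?_, f.apply_symm_apply q⟩
      rw [mem_ball]
      by_contra hge
      push_neg at hge
      have hne : f.symm q ≠ c v := by
        intro h
        rw [h, dist_self] at hge
        linarith
      have h1 := bnd2 r hr (f.symm q) (c v) hne hge
      rw [f.apply_symm_apply] at h1
      have h2 : η 1 * dist q (f (c v)) < η 1 * ρ := mul_lt_mul_of_pos_left hq hη1pos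
      have h3 : η 1 * ρ = ψ r := by
        rw [hρ_def]
        field_simp
      linarith
    have hup : ∀ v, f '' ball (c v) r ⊆ ball (f 0) (2 * η 1 * ψ R) := by
      intro v q hq
      obtain ⟨y, hy, rfl⟩ := hq
      rw [mem_ball] at hy ⊢
      have hyR : dist y 0 < R := by
        have ht := dist_triangle y (c v) 0
        have h4 : dist (c v) 0 ≤ Real.sqrt n * (2 * r * k) := by
          rw [dist_zero_right]
          exact hnorm v
        have h5 : (1:ℝ) * r ≤ (Real.sqrt n * k) * r :=
          mul_le_mul_of_nonneg_right (by nlinarith) hr.le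
        rw [hR_def]
        nlinarith
      by_cases hy0 : y = (0 : E)
      · rw [hy0, dist_self]
        positivity
      · have h6 := bnd1 R hR y 0 hy0 (le_of_lt hyR)
        have h7 : η 1 * ψ R < 2 * η 1 * ψ R := by nlinarith
        linarith
    have hμlow : ∀ v, ENNReal.ofReal (A⁻¹ * ρ ^ n) ≤ μH[(n:ℝ)] (f '' ball (c v) r) := by
      intro v
      have h1 := (hball (f (c v)) ρ hρ).1
      calc ENNReal.ofReal (A⁻¹ * ρ ^ n) ≤ μH[(n:ℝ)] (ball (f (c v)) ρ) :=
            ENNReal.ofReal_le_of_le_toReal h1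
        _ ≤ _ := measure_mono (hlow v)
    have hμup : μH[(n:ℝ)] (ball (f 0) (2 * η 1 * ψ R)) ≤
        ENNReal.ofReal (A * (2 * η 1 * ψ R) ^ n) := by
      obtain ⟨_, h2, hfin⟩ := (hball (f 0) (2 * η 1 * ψ R) (by positivity))
      exact (ENNReal.le_ofReal_iff_toReal_le hfin (by positivity)).mpr h2
    have hunion : μH[(n:ℝ)] (⋃ v : Fin n → Fin k, f '' ball (c v) r) =
        ∑' v : Fin n → Fin k, μH[(n:ℝ)] (f '' ball (c v) r) :=
      measure_iUnion hdisj (fun v => hmeas v)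
    have hsum : ((k : ℝ≥0∞)) ^ n * ENNReal.ofReal (A⁻¹ * ρ ^ n) ≤
        ∑' v : Fin n → Fin k, μH[(n:ℝ)] (f '' ball (c v) r) := by
      rw [tsum_fintype]
      have hcard : Fintype.card (Fin n → Fin k) = k ^ n := by
        simp [Fintype.card_fun]
      calc ((k : ℝ≥0∞)) ^ n * ENNReal.ofReal (A⁻¹ * ρ ^ n)
          = (Finset.univ : Finset (Fin n → Fin k)).card • ENNReal.ofReal (A⁻¹ * ρ ^ n) := by
            rw [Finset.card_univ, hcard, nsmul_eq_mul]
            push_cast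
            ring
        _ ≤ ∑ v : Fin n → Fin k, μH[(n:ℝ)] (f '' ball (c v) r) :=
            Finset.card_nsmul_le_sum _ _ _ (fun v _ => hμlow v)
    have hENN : ((k : ℝ≥0∞)) ^ n * ENNReal.ofReal (A⁻¹ * ρ ^ n) ≤
        ENNReal.ofReal (A * (2 * η 1 * ψ R) ^ n) := by
      refine hsum.trans ?_
      rw [← hunion]
      refine (measure_mono ?_).trans hμup
      exact iUnion_subset hup
    have hreal : (k:ℝ) ^ n * (A⁻¹ * ρ ^ n) ≤ A * (2 * η 1 * ψ R) ^ n := by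
      have hcast : ((k : ℝ≥0∞)) ^ n = ENNReal.ofReal ((k:ℝ) ^ n) := by
        rw [ENNReal.ofReal_pow (Nat.cast_nonneg k), ENNReal.ofReal_natCast]
      rw [hcast, ← ENNReal.ofReal_mul (by positivity)] at hENN
      exact (ENNReal.ofReal_le_ofReal_iff (by positivity)).mp hENN
    have hApos : 0 < A := lt_of_lt_of_le one_pos hA
    have hpow : ((k:ℝ) * ρ) ^ n ≤ (A ^ 2 * (2 * η 1 * ψ R)) ^ n := by
      have h8 : ((k:ℝ) * ρ) ^ n = (k:ℝ) ^ n * ρ ^ n := mul_pow _ _ n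
      have h9 : (k:ℝ) ^ n * ρ ^ n ≤ A ^ 2 * (2 * η 1 * ψ R) ^ n := by
        have := mul_le_mul_of_nonneg_left hreal hApos.le
        calc (k:ℝ) ^ n * ρ ^ n = A * ((k:ℝ) ^ n * (A⁻¹ * ρ ^ n)) := by
              field_simp
          _ ≤ A * (A * (2 * η 1 * ψ R) ^ n) := this
          _ = A ^ 2 * (2 * η 1 * ψ R) ^ n := by ring
      have h10 : A ^ 2 * (2 * η 1 * ψ R) ^ n ≤ (A ^ 2) ^ n * (2 * η 1 * ψ R) ^ n := by
        apply mul_le_mul_of_nonneg_right _ (by positivity)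
        exact le_self_pow₀ (by nlinarith) (by omega)
      rw [h8, mul_pow]
      calc (k:ℝ) ^ n * ρ ^ n ≤ A ^ 2 * (2 * η 1 * ψ R) ^ n := h9
        _ ≤ (A ^ 2) ^ n * (2 * η 1 * ψ R) ^ n := h10
    have hbase : (k:ℝ) * ρ ≤ A ^ 2 * (2 * η 1 * ψ R) :=
      le_of_pow_le_pow_left₀ (by omega) (by positivity) hpow
    have hfin2 : (k:ℝ) * ψ r = ((k:ℝ) * ρ) * η 1 := by
      rw [hρ_def]
      field_simp
    rw [hfin2]
    calc ((k:ℝ) * ρ) * η 1 ≤ (A ^ 2 * (2 * η 1 * ψ R)) * η 1 :=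
          mul_le_mul_of_nonneg_right hbase hη1pos.le
      _ = 2 * A ^ 2 * η 1 ^ 2 * ψ R := by ring
  have low2 : ∀ s : ℝ, 1 ≤ s → D * s / (12 * Real.sqrt n * A ^ 2 * η 1 ^ 4) ≤ ψ s := by
    intro s hs
    have hs0 : 0 < s := lt_of_lt_of_le one_pos hs
    have hsq : 0 < Real.sqrt n := lt_of_lt_of_le one_pos hsn
    set k : ℕ := ⌈s / (3 * Real.sqrt n)⌉₊ with hk_def
    have hk1 : 1 ≤ k := by
      rw [hk_def]
      apply Nat.one_le_iff_ne_zero.mpr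
      intro h
      have h1 := Nat.ceil_eq_zero.mp h
      have h2 : (0:ℝ) < s / (3 * Real.sqrt n) := by positivity
      linarith
    have hkpos : (0:ℝ) < k := by exact_mod_cast hk1
    have hks : s / (3 * Real.sqrt n) ≤ k := Nat.le_ceil _
    set r : ℝ := s / (3 * Real.sqrt n * k) with hr_def
    have hr : 0 < r := by positivity
    have hrs : 3 * Real.sqrt n * k * r = s := by
      rw [hr_def]
      field_simp
    have hr1 : r ≤ 1 := by
      rw [hr_def, div_le_one (by positivity)]
      calc s = (s / (3 * Real.sqrt n)) * (3 * Real.sqrt n) := by field_simp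
        _ ≤ k * (3 * Real.sqrt n) := mul_le_mul_of_nonneg_right hks (by positivity)
        _ = 3 * Real.sqrt n * k := by ring
    have h1 := key r k hr hk1
    rw [hrs] at h1
    have h2 := low1 r hr hr1
    have h3 : (k:ℝ) * (D * r / (2 * η 1 ^ 2)) ≤ 2 * A ^ 2 * η 1 ^ 2 * ψ s :=
      le_trans (mul_le_mul_of_nonneg_left h2 hkpos.le) h1
    have hkr : (k:ℝ) * r = s / (3 * Real.sqrt n) := by
      rw [hr_def]
      field_simp
    have h4 : (k:ℝ) * (D * r / (2 * η 1 ^ 2)) = D * (s / (3 * Real.sqrt n)) / (2 * η 1 ^ 2) := by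
      rw [← hkr]
      ring
    rw [h4] at h3
    rw [div_le_iff₀ (by positivity)]
    have h5 : D * s = (D * (s / (3 * Real.sqrt n)) / (2 * η 1 ^ 2)) * (6 * Real.sqrt n * η 1 ^ 2) := by
      field_simp
      ring
    rw [h5]
    calc (D * (s / (3 * Real.sqrt n)) / (2 * η 1 ^ 2)) * (6 * Real.sqrt n * η 1 ^ 2)
        ≤ (2 * A ^ 2 * η 1 ^ 2 * ψ s) * (6 * Real.sqrt n * η 1 ^ 2) :=
          mul_le_mul_of_nonneg_right h3 (by positivity)
      _ = ψ s * (12 * Real.sqrt n * A ^ 2 * η 1 ^ 4) := by ring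
  have up2 : ∀ s : ℝ, 0 < s → s ≤ 1 → ψ s ≤ 12 * Real.sqrt n * A ^ 2 * η 1 ^ 4 * D * s := by
    intro s hs hs1
    have hsq : 0 < Real.sqrt n := lt_of_lt_of_le one_pos hsn
    set k : ℕ := ⌈1 / (3 * Real.sqrt n * s)⌉₊ with hk_def
    have hk1 : 1 ≤ k := by
      rw [hk_def]
      apply Nat.one_le_iff_ne_zero.mpr
      intro h
      have h1 := Nat.ceil_eq_zero.mp h
      have h2 : (0:ℝ) < 1 / (3 * Real.sqrt n * s) := by positivity
      linarith
    have hkpos : (0:ℝ) < k := by exact_mod_cast hk1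
    have hks : 1 / (3 * Real.sqrt n * s) ≤ k := Nat.le_ceil _
    set R : ℝ := 3 * Real.sqrt n * k * s with hR_def
    have hR1 : 1 ≤ R := by
      rw [hR_def]
      calc (1:ℝ) = (1 / (3 * Real.sqrt n * s)) * (3 * Real.sqrt n * s) := by field_simp
        _ ≤ k * (3 * Real.sqrt n * s) := mul_le_mul_of_nonneg_right hks (by positivity)
        _ = 3 * Real.sqrt n * k * s := by ring
    have h1 := key s k hs hk1
    have h2 := up1 R hR1
    have hRk : R / (k:ℝ) = 3 * Real.sqrt n * s := by
      rw [hR_def]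
      field_simp
    have h3 : (k:ℝ) * ψ s ≤ 2 * A ^ 2 * η 1 ^ 2 * (2 * η 1 ^ 2 * D * R) :=
      le_trans h1 (mul_le_mul_of_nonneg_left h2 (by positivity))
    have h4 : ψ s ≤ (2 * A ^ 2 * η 1 ^ 2 * (2 * η 1 ^ 2 * D * R)) / (k:ℝ) := by
      rw [le_div_iff₀ hkpos, mul_comm]
      exact h3
    have h5 : (2 * A ^ 2 * η 1 ^ 2 * (2 * η 1 ^ 2 * D * R)) / (k:ℝ)
        = 4 * A ^ 2 * η 1 ^ 4 * D * (R / (k:ℝ)) := by ring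
    rw [h5, hRk] at h4
    calc ψ s ≤ 4 * A ^ 2 * η 1 ^ 4 * D * (3 * Real.sqrt n * s) := h4
      _ = 12 * Real.sqrt n * A ^ 2 * η 1 ^ 4 * D * s := by ring
  -- uniform two-sided bounds for ψ
  have hA2 : (1:ℝ) ≤ A ^ 2 := one_le_pow₀ hA
  have hη14 : (1:ℝ) ≤ η 1 ^ 4 := one_le_pow₀ hη1
  have hη12 : (1:ℝ) ≤ η 1 ^ 2 := one_le_pow₀ hη1
  set K : ℝ := 12 * Real.sqrt n * A ^ 2 * η 1 ^ 4 with hK_def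
  have hK2 : 2 * η 1 ^ 2 ≤ K := by
    rw [hK_def]
    have e1 : η 1 ^ 2 ≤ η 1 ^ 4 := pow_le_pow_right₀ hη1 (by norm_num)
    have e2 : (1:ℝ) ≤ Real.sqrt n * A ^ 2 := by nlinarith [hsn, hA2]
    nlinarith [e1, mul_le_mul_of_nonneg_right e2 (by positivity : (0:ℝ) ≤ η 1 ^ 4),
      (by positivity : (0:ℝ) ≤ Real.sqrt n * A ^ 2 * η 1 ^ 4)]
  have hKpos : 0 < K := by
    rw [hK_def]
    positivity
  have hψup : ∀ s : ℝ, 0 < s → ψ s ≤ K * D * s := by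
    intro s hs
    rcases le_or_gt s 1 with h | h
    · exact up2 s hs h
    · have h1 := up1 s h.le
      have h2 : 2 * η 1 ^ 2 * D * s ≤ K * D * s :=
        mul_le_mul_of_nonneg_right (mul_le_mul_of_nonneg_right hK2 hD.le) hs.le
      linarith
  have hψlow : ∀ s : ℝ, 0 < s → D * s / K ≤ ψ s := by
    intro s hs
    rcases le_or_gt s 1 with h | h
    · have h1 := low1 s hs h
      have h2 : D * s / K ≤ D * s / (2 * η 1 ^ 2) := by
        rw [div_le_div_iff₀ hKpos (by positivity)]
        have : 0 ≤ D * s := by positivity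
        nlinarith
      linarith
    · exact low2 s h.le
  -- final assembly
  have hη1D : 0 < η 1 * K / D := by positivity
  refine ⟨max 1 (max (η 1 * (K * D)) (η 1 * K / D)), le_max_left _ _, ?_⟩
  set L : ℝ := max 1 (max (η 1 * (K * D)) (η 1 * K / D)) with hL_def
  have hL1 : (1:ℝ) ≤ L := le_max_left _ _
  have hLpos : 0 < L := lt_of_lt_of_le one_pos hL1
  have hLup : η 1 * (K * D) ≤ L := le_trans (le_max_left _ _) (le_max_right _ _)
  have hLlow : η 1 * K / D ≤ L := le_trans (le_max_right _ _) (le_max_right _ _)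
  intro x y
  rcases eq_or_ne x y with rfl | hxy
  · simp
  · have hs : 0 < dist x y := dist_pos.mpr hxy
    set s : ℝ := dist x y with hs_def
    constructor
    · -- lower bound
      have h1 := bnd2 s hs x y hxy (le_refl s)
      have h2 : D * s / K ≤ ψ s := hψlow s hs
      have h3 : D * s / K ≤ η 1 * dist (f x) (f y) := le_trans h2 h1
      have h4 : D / (K * η 1) * s ≤ dist (f x) (f y) := by
        rw [div_mul_eq_mul_div, div_le_iff₀ (by positivity)]
        calc D * s ≤ η 1 * dist (f x) (f y) * K := by
              rw [div_le_iff₀ hKpos] at h3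
              linarith
          _ = dist (f x) (f y) * (K * η 1) := by ring
      have h5 : L⁻¹ ≤ D / (K * η 1) := by
        have h6 : η 1 * K / D ≤ L := hLlow
        have h7 : 0 < η 1 * K / D := hη1D
        have h8 : L⁻¹ ≤ (η 1 * K / D)⁻¹ := by
          apply inv_anti₀ h7 h6
        calc L⁻¹ ≤ (η 1 * K / D)⁻¹ := h8
          _ = D / (η 1 * K) := by rw [inv_div]
          _ = D / (K * η 1) := by rw [mul_comm (η 1) K]
      calc L⁻¹ * s ≤ D / (K * η 1) * s := mul_le_mul_of_nonneg_right h5 hs.le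
        _ ≤ dist (f x) (f y) := h4
    · -- upper bound
      have h1 := bnd1 s hs x y hxy (le_refl s)
      have h2 : ψ s ≤ K * D * s := hψup s hs
      calc dist (f x) (f y) ≤ η 1 * ψ s := h1
        _ ≤ η 1 * (K * D * s) := mul_le_mul_of_nonneg_left h2 hη1pos.le
        _ = (η 1 * (K * D)) * s := by ring
        _ ≤ L * s := mul_le_mul_of_nonneg_right hLup hs.le
end

section
/- Let X be a proper, connected metric space that is L-inversion-invariant bi-Lipschitz homogeneous (both X and each inversion X*_p are L-bi-Lipschitz homogeneous). Then X is quasi-self-similar: there exist M = M(L) ≥ 1 and a point x ∈ X such that for every s ≥ 1 there is an M-bi-Lipschitz homeomorphism f_s : (X, s·d, x) → (X, d, x) fixing x. -/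
open Metric Set

/-- The chain infimum distance associated to a kernel `ρ`. -/
noncomputable def kernelChainDist {α : Type*} (ρ : α → α → ℝ) (x y : α) : ℝ :=
  sInf {s : ℝ | ∃ c : List α, c ≠ [] ∧ c.head? = some x ∧ c.getLast? = some y ∧
    s = ((c.zip c.tail).map (fun q => ρ q.1 q.2)).sum}

/-- The point set of the inversion of `X` at `p`: `(X ∖ {p}) ∪ {∞}`,
with `none` playing the role of `∞`. -/
def InvPt (X : Type*) (p : X) := Option {x : X // x ≠ p}

/-- The inversion kernel on `(X ∖ {p}) ∪ {∞}`:
`i_p(x,y) = d(x,y)/(d(x,p)d(y,p))` and `i_p(x,∞) = 1/d(x,p)`. -/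
noncomputable def invPtKernel {X : Type*} [MetricSpace X] (p : X) :
    InvPt X p → InvPt X p → ℝ
  | some x, some y => dist x.1 y.1 / (dist x.1 p * dist y.1 p)
  | some x, none => 1 / dist x.1 p
  | none, some y => 1 / dist y.1 p
  | none, none => 0

/-- The inversion distance `d_p` on `X*_p`. -/
noncomputable def invPtDist {X : Type*} [MetricSpace X] (p : X) :
    InvPt X p → InvPt X p → ℝ :=
  kernelChainDist (invPtKernel p)

namespace IIBLH

noncomputable def chainSum {α : Type*} (ρ : α → α → ℝ) (c : List α) : ℝ :=
  ((c.zip c.tail).map (fun q => ρ q.1 q.2)).sum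

@[simp] lemma chainSum_nil {α : Type*} (ρ : α → α → ℝ) : chainSum ρ [] = 0 := rfl

@[simp] lemma chainSum_single {α : Type*} (ρ : α → α → ℝ) (a : α) :
    chainSum ρ [a] = 0 := rfl

@[simp] lemma chainSum_cons_cons {α : Type*} (ρ : α → α → ℝ) (a b : α) (t : List α) :
    chainSum ρ (a :: b :: t) = ρ a b + chainSum ρ (b :: t) := rfl

lemma chainSum_nonneg {α : Type*} {ρ : α → α → ℝ} (hρ : ∀ a b, 0 ≤ ρ a b)
    (c : List α) : 0 ≤ chainSum ρ c := by
  apply List.sum_nonneg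
  intro x hx
  obtain ⟨q, _, rfl⟩ := List.mem_map.1 hx
  exact hρ _ _

variable {X : Type*} [MetricSpace X] (p : X)

lemma invPtKernel_nonneg (u v : InvPt X p) : 0 ≤ invPtKernel p u v := by
  cases u <;> cases v <;> simp [invPtKernel] <;> positivity

lemma invPtKernel_self (u : InvPt X p) : invPtKernel p u u = 0 := by
  cases u <;> simp [invPtKernel]

lemma eq_of_invPtKernel_eq_zero {u v : InvPt X p} (h : invPtKernel p u v = 0) :
    u = v := by
  cases u with
  | none => cases v with
    | none => rfl
    | some z =>
        exfalso
        have hz : (0:ℝ) < dist z.1 p := dist_pos.2 z.2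
        simp only [invPtKernel] at h
        rw [div_eq_zero_iff] at h
        rcases h with h | h
        · norm_num at h
        · linarith
  | some z => cases v with
    | none =>
        exfalso
        have hz : (0:ℝ) < dist z.1 p := dist_pos.2 z.2
        simp only [invPtKernel] at h
        rw [div_eq_zero_iff] at h
        rcases h with h | h
        · norm_num at h
        · linarith
    | some w =>
        have hz : (0:ℝ) < dist z.1 p := dist_pos.2 z.2
        have hw : (0:ℝ) < dist w.1 p := dist_pos.2 w.2
        simp only [invPtKernel] at h
        rw [div_eq_zero_iff] at h
        rcases h with h | h
        · exact congrArg some (Subtype.ext (by rwa [← dist_eq_zero]))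
        · nlinarith

noncomputable def hfun : InvPt X p → ℝ
  | none => 0
  | some z => 1 / dist z.1 p

@[simp] lemma hfun_none : hfun p (none : InvPt X p) = 0 := rfl
@[simp] lemma hfun_some (z : {x : X // x ≠ p}) :
    hfun p (some z : InvPt X p) = 1 / dist z.1 p := rfl

lemma hfun_nonneg (u : InvPt X p) : 0 ≤ hfun p u := by
  cases u <;> simp [hfun] <;> positivity

lemma abs_hfun_sub_le (u v : InvPt X p) :
    |hfun p u - hfun p v| ≤ invPtKernel p u v := by
  cases u with
  | none => cases v with
    | none => simp [invPtKernel]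
    | some w =>
        have hw : (0:ℝ) < dist w.1 p := dist_pos.2 w.2
        simp only [hfun_none, hfun_some, invPtKernel, zero_sub, abs_neg]
        rw [abs_of_nonneg (by positivity)]
  | some z => cases v with
    | none =>
        have hz : (0:ℝ) < dist z.1 p := dist_pos.2 z.2
        simp only [hfun_none, hfun_some, invPtKernel, sub_zero]
        rw [abs_of_nonneg (by positivity)]
    | some w =>
        have hz : (0:ℝ) < dist z.1 p := dist_pos.2 z.2
        have hw : (0:ℝ) < dist w.1 p := dist_pos.2 w.2
        have hd : |dist z.1 p - dist w.1 p| ≤ dist z.1 w.1 := abs_dist_sub_le _ _ _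
        simp only [hfun_some, invPtKernel]
        have key : (1:ℝ)/dist z.1 p - 1/dist w.1 p
            = (dist w.1 p - dist z.1 p)/(dist z.1 p * dist w.1 p) := by
          field_simp
        rw [key, abs_div, abs_of_pos (mul_pos hz hw)]
        have hnum : |dist w.1 p - dist z.1 p| ≤ dist z.1 w.1 := by
          rw [abs_sub_comm]; exact abs_dist_sub_le _ _ _
        gcongr

lemma invPtKernel_le_hfun_add (u v : InvPt X p) :
    invPtKernel p u v ≤ hfun p u + hfun p v := by
  cases u with
  | none => cases v with
    | none => simp [invPtKernel]
    | some w => simp [invPtKernel, hfun]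
  | some z => cases v with
    | none => simp [invPtKernel, hfun]
    | some w =>
        have hz : (0:ℝ) < dist z.1 p := dist_pos.2 z.2
        have hw : (0:ℝ) < dist w.1 p := dist_pos.2 w.2
        simp only [invPtKernel, hfun_some]
        have hd : dist z.1 w.1 ≤ dist z.1 p + dist w.1 p :=
          (dist_triangle z.1 p w.1).trans (by rw [dist_comm p w.1])
        rw [div_add_div _ _ (ne_of_gt hz) (ne_of_gt hw),
          div_le_div_iff₀ (by positivity) (by positivity)]
        nlinarith [mul_le_mul_of_nonneg_right hd (mul_pos hz hw).le]

lemma telescope_head :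
    ∀ (c : List (InvPt X p)) (x u : InvPt X p), c.head? = some x → u ∈ c →
      |hfun p x - hfun p u| ≤ chainSum (invPtKernel p) c := by
  intro c
  induction c with
  | nil => intro x u _ hu; simp at hu
  | cons a t ih =>
      intro x u hx hu
      simp only [List.head?_cons, Option.some.injEq] at hx
      subst hx
      rcases List.mem_cons.1 hu with rfl | hu
      · simpa using chainSum_nonneg (invPtKernel_nonneg p) (u :: t)
      · match t, hu with
        | b :: t', hu =>
            have h1 : |hfun p a - hfun p b| ≤ invPtKernel p a b := abs_hfun_sub_le p a b
            have h2 : |hfun p b - hfun p u| ≤ chainSum (invPtKernel p) (b :: t') :=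
              ih b u rfl hu
            calc |hfun p a - hfun p u|
                ≤ |hfun p a - hfun p b| + |hfun p b - hfun p u| := abs_sub_le _ _ _
              _ ≤ invPtKernel p a b + chainSum (invPtKernel p) (b :: t') := by linarith
              _ = chainSum (invPtKernel p) (a :: b :: t') := (chainSum_cons_cons _ _ _ _).symm

lemma telescope_last :
    ∀ (c : List (InvPt X p)) (y u : InvPt X p), c.getLast? = some y → u ∈ c →
      |hfun p u - hfun p y| ≤ chainSum (invPtKernel p) c := by
  intro c
  induction c with
  | nil => intro y u _ hu; simp at hu
  | cons a t ih =>
      intro y u hy hu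
      match t with
      | [] =>
          simp only [List.getLast?_singleton, Option.some.injEq] at hy
          subst hy
          rcases List.mem_singleton.1 hu with rfl
          simp
      | b :: t' =>
          have hy' : (b :: t').getLast? = some y := by
            rwa [List.getLast?_cons_cons] at hy
          rcases List.mem_cons.1 hu with rfl | hu
          · have h1 : |hfun p u - hfun p b| ≤ invPtKernel p u b := abs_hfun_sub_le p u b
            have h2 : |hfun p b - hfun p y| ≤ chainSum (invPtKernel p) (b :: t') :=
              ih y b hy' List.mem_cons_self
            calc |hfun p u - hfun p y|
                ≤ |hfun p u - hfun p b| + |hfun p b - hfun p y| := abs_sub_le _ _ _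
              _ ≤ invPtKernel p u b + chainSum (invPtKernel p) (b :: t') := by linarith
              _ = chainSum (invPtKernel p) (u :: b :: t') := (chainSum_cons_cons _ _ _ _).symm
          · have h2 := ih y u hy' hu
            have h0 : 0 ≤ invPtKernel p a b := invPtKernel_nonneg p a b
            rw [chainSum_cons_cons]
            linarith

lemma chain_lower (H : ℝ) (hH : 0 < H) :
    ∀ (c : List (InvPt X p)) (zx zy : {x : X // x ≠ p}),
      c.head? = some (some zx) → c.getLast? = some (some zy) →
      (∀ u ∈ c, H / 2 < hfun p u) →
      (H/2)^2 * dist zx.1 zy.1 ≤ chainSum (invPtKernel p) c := by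
  intro c
  induction c with
  | nil => intro zx zy h _ _; simp at h
  | cons a t ih =>
      intro zx zy hx hy hall
      simp only [List.head?_cons, Option.some.injEq] at hx
      obtain rfl : a = some zx := Option.some.inj hx
      match t with
      | [] =>
          erw [List.getLast?_singleton, Option.some.injEq] at hy
          obtain rfl : zx = zy := Option.some.inj hy
          simp; exact le_rfl
      | b :: t' =>
          have hy' : (b :: t').getLast? = some (some zy) := by
            erw [List.getLast?_cons_cons] at hy; exact hy
          have hb : H / 2 < hfun p b := hall b (List.mem_cons_of_mem _ List.mem_cons_self)
          match b, hb with
          | none, hb => exact absurd hb (by simp [hH.le]; linarith)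
          | some zb, hb =>
              have hall' : ∀ u ∈ (some zb :: t' : List (InvPt X p)), H / 2 < hfun p u :=
                fun u hu => hall u (List.mem_cons_of_mem _ hu)
              have IH := ih zb zy rfl hy' hall'
              have hzx : (0:ℝ) < dist zx.1 p := dist_pos.2 zx.2
              have hzb : (0:ℝ) < dist zb.1 p := dist_pos.2 zb.2
              have hx2 : H / 2 < 1 / dist zx.1 p := by
                simpa using hall _ List.mem_cons_self
              have hb2 : H / 2 < 1 / dist zb.1 p := by simpa using hb
              have hmul : (H/2)*(H/2) ≤ (1/dist zx.1 p)*(1/dist zb.1 p) :=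
                mul_le_mul hx2.le hb2.le (by linarith) (by positivity)
              have hker : invPtKernel p (some zx) (some zb)
                  = dist zx.1 zb.1 * ((1/dist zx.1 p)*(1/dist zb.1 p)) := by
                show dist zx.1 zb.1 / (dist zx.1 p * dist zb.1 p) = _
                field_simp
              have hk : (H/2)^2 * dist zx.1 zb.1 ≤ invPtKernel p (some zx) (some zb) := by
                rw [hker, sq]
                calc H/2*(H/2) * dist zx.1 zb.1
                    = dist zx.1 zb.1 * ((H/2)*(H/2)) := by ring
                  _ ≤ dist zx.1 zb.1 * ((1/dist zx.1 p)*(1/dist zb.1 p)) :=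
                      mul_le_mul_of_nonneg_left hmul dist_nonneg
              have htri : dist zx.1 zy.1 ≤ dist zx.1 zb.1 + dist zb.1 zy.1 :=
                dist_triangle _ _ _
              erw [chainSum_cons_cons]
              nlinarith [sq_nonneg (H/2)]

lemma invPtKernel_le_four_chainSum :
    ∀ (c : List (InvPt X p)) (x y : InvPt X p), c.head? = some x → c.getLast? = some y →
      invPtKernel p x y ≤ 4 * chainSum (invPtKernel p) c := by
  intro c x y hx hy
  set H : ℝ := max (hfun p x) (hfun p y) with hH
  have hxc : x ∈ c := by
    cases c with
    | nil => simp at hx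
    | cons a t => simp only [List.head?_cons, Option.some.injEq] at hx; subst hx; exact List.mem_cons_self
  have hyc : y ∈ c := by
    obtain ⟨h, rfl⟩ := List.mem_getLast?_eq_getLast (x := y) (by rw [Option.mem_def]; exact hy)
    exact List.getLast_mem h
  have hchainpos : 0 ≤ chainSum (invPtKernel p) c := chainSum_nonneg (invPtKernel_nonneg p) c
  by_cases hA : ∃ u ∈ c, hfun p u ≤ H / 2
  · -- Case A
    obtain ⟨u, huc, hu⟩ := hA
    have hS : H / 2 ≤ chainSum (invPtKernel p) c := by
      rcases le_total (hfun p y) (hfun p x) with hxy | hxy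
      · have hHx : H = hfun p x := by rw [hH, max_eq_left hxy]
        have := telescope_head p c x u hx huc
        have habs : hfun p x - hfun p u ≤ |hfun p x - hfun p u| := le_abs_self _
        linarith [hHx ▸ habs]
      · have hHy : H = hfun p y := by rw [hH, max_eq_right hxy]
        have := telescope_last p c y u hy huc
        have habs : -(hfun p u - hfun p y) ≤ |hfun p u - hfun p y| := neg_le_abs _
        linarith [hHy ▸ habs]
    have hk2 : invPtKernel p x y ≤ 2 * H := by
      have := invPtKernel_le_hfun_add p x y
      have h1 : hfun p x ≤ H := le_max_left _ _
      have h2 : hfun p y ≤ H := le_max_right _ _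
      linarith
    linarith
  · -- Case B
    push_neg at hA
    have hx2 : H / 2 < hfun p x := hA x hxc
    have hHpos : 0 < H := by
      have h1 : hfun p x ≤ H := le_max_left _ _
      have h0 : 0 ≤ hfun p x := hfun_nonneg p x
      nlinarith [hA x hxc]
    obtain ⟨zx, rfl⟩ : ∃ zx, x = some zx := by
      match x, hx2 with
      | none, hx2 => exact absurd hx2 (by simp; linarith)
      | some zx, _ => exact ⟨zx, rfl⟩
    obtain ⟨zy, rfl⟩ : ∃ zy, y = some zy := by
      have hy2 : H / 2 < hfun p y := hA y hyc
      match y, hy2 with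
      | none, hy2 => exact absurd hy2 (by simp; linarith)
      | some zy, _ => exact ⟨zy, rfl⟩
    have hlow := chain_lower p H hHpos c zx zy hx hy (fun u hu => hA u hu)
    have hzx : (0:ℝ) < dist zx.1 p := dist_pos.2 zx.2
    have hzy : (0:ℝ) < dist zy.1 p := dist_pos.2 zy.2
    have hxH : 1 / dist zx.1 p ≤ H := by
      have : hfun p (some zx) ≤ H := le_max_left _ _
      simpa using this
    have hyH : 1 / dist zy.1 p ≤ H := by
      have : hfun p (some zy) ≤ H := le_max_right _ _
      simpa using this
    have hker : invPtKernel p (some zx) (some zy)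
        = dist zx.1 zy.1 * ((1/dist zx.1 p)*(1/dist zy.1 p)) := by
      show dist zx.1 zy.1 / (dist zx.1 p * dist zy.1 p) = _
      field_simp
    have hbound : invPtKernel p (some zx) (some zy) ≤ H^2 * dist zx.1 zy.1 := by
      rw [hker]
      have h1 : (0:ℝ) < 1 / dist zx.1 p := by positivity
      have h2 : (0:ℝ) < 1 / dist zy.1 p := by positivity
      have : (1/dist zx.1 p)*(1/dist zy.1 p) ≤ H^2 := by
        rw [sq]
        exact mul_le_mul hxH hyH h2.le (by linarith)
      calc dist zx.1 zy.1 * ((1/dist zx.1 p)*(1/dist zy.1 p))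
          ≤ dist zx.1 zy.1 * H^2 := mul_le_mul_of_nonneg_left this dist_nonneg
        _ = H^2 * dist zx.1 zy.1 := by ring
    have : H^2 * dist zx.1 zy.1 = 4 * ((H/2)^2 * dist zx.1 zy.1) := by ring
    linarith

/-- The chain distance is at most the kernel. -/
lemma invPtDist_le_kernel (u v : InvPt X p) :
    invPtDist p u v ≤ invPtKernel p u v := by
  apply csInf_le
  · refine ⟨0, fun s hs => ?_⟩
    obtain ⟨c, -, -, -, rfl⟩ := hs
    exact chainSum_nonneg (invPtKernel_nonneg p) c
  · exact ⟨[u, v], by simp, by simp, by simp, by simp [chainSum]⟩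

lemma kernel_le_four_invPtDist (u v : InvPt X p) :
    invPtKernel p u v ≤ 4 * invPtDist p u v := by
  have h : invPtKernel p u v / 4 ≤ invPtDist p u v := by
    apply le_csInf
    · exact ⟨invPtKernel p u v, [u, v], by simp, by simp, by simp, by simp [chainSum]⟩
    · rintro b ⟨c, -, hx, hy, rfl⟩
      have := invPtKernel_le_four_chainSum p c u v hx hy
      show invPtKernel p u v / 4 ≤ chainSum (invPtKernel p) c
      linarith
  linarith

lemma invPtDist_nonneg (u v : InvPt X p) : 0 ≤ invPtDist p u v := by
  have := kernel_le_four_invPtDist p u v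
  have := invPtKernel_nonneg p u v
  linarith

lemma invPtKernel_symm (u v : InvPt X p) :
    invPtKernel p u v = invPtKernel p v u := by
  cases u <;> cases v <;> simp [invPtKernel, dist_comm, mul_comm]

lemma kernel_sandwich (L : ℝ) (hL : 1 ≤ L)
    (g : InvPt X p → InvPt X p)
    (hgbl : ∀ a b : InvPt X p, L⁻¹ * invPtDist p a b ≤ invPtDist p (g a) (g b) ∧
      invPtDist p (g a) (g b) ≤ L * invPtDist p a b) (a b : InvPt X p) :
    (4*L)⁻¹ * invPtKernel p a b ≤ invPtKernel p (g a) (g b) ∧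
      invPtKernel p (g a) (g b) ≤ (4*L) * invPtKernel p a b := by
  have hL0 : (0:ℝ) < L := by linarith
  have h1 := invPtDist_le_kernel p a b
  have h2 := kernel_le_four_invPtDist p a b
  have h3 := invPtDist_le_kernel p (g a) (g b)
  have h4 := kernel_le_four_invPtDist p (g a) (g b)
  have h5 := (hgbl a b).1
  have h6 := (hgbl a b).2
  constructor
  · -- lower
    have hstep : L⁻¹ * ((4:ℝ)⁻¹ * invPtKernel p a b) ≤ L⁻¹ * invPtDist p a b := by
      apply mul_le_mul_of_nonneg_left _ (by positivity)
      linarith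
    calc (4*L)⁻¹ * invPtKernel p a b = L⁻¹ * ((4:ℝ)⁻¹ * invPtKernel p a b) := by
          rw [mul_inv]; ring
      _ ≤ L⁻¹ * invPtDist p a b := hstep
      _ ≤ invPtDist p (g a) (g b) := h5
      _ ≤ invPtKernel p (g a) (g b) := h3
  · -- upper
    have hstep : L * invPtDist p a b ≤ L * invPtKernel p a b :=
      mul_le_mul_of_nonneg_left h1 hL0.le
    calc invPtKernel p (g a) (g b) ≤ 4 * invPtDist p (g a) (g b) := h4
      _ ≤ 4 * (L * invPtDist p a b) := by linarith
      _ ≤ 4 * (L * invPtKernel p a b) := by linarith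
      _ = (4*L) * invPtKernel p a b := by ring


lemma core (L : ℝ) (hL : 1 ≤ L) {p q : X} (hqp : q ≠ p)
    (g : InvPt X p → InvPt X p) (hgbij : Function.Bijective g)
    (hgq : g (some ⟨q, hqp⟩) = none)
    (hgbl : ∀ a b : InvPt X p, L⁻¹ * invPtDist p a b ≤ invPtDist p (g a) (g b) ∧
      invPtDist p (g a) (g b) ≤ L * invPtDist p a b) :
    ∃ F : InvPt X q → X, Function.Bijective F ∧ ∀ u v : InvPt X q,
      (64*L^3)⁻¹ * (dist p q ^ 2 * invPtKernel q u v) ≤ dist (F u) (F v) ∧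
      dist (F u) (F v) ≤ (64*L^3) * (dist p q ^ 2 * invPtKernel q u v) := by
  classical
  have hL0 : (0:ℝ) < L := by linarith
  have hpq : p ≠ q := Ne.symm hqp
  have hdpq : (0:ℝ) < dist p q := dist_pos.2 hpq
  set qh : InvPt X p := some ⟨q, hqp⟩ with hqh
  set ph : InvPt X q := some ⟨p, hpq⟩ with hph
  set ψ : InvPt X q → InvPt X p := fun u => match u with
    | none => none
    | some z => if h : z.1 = p then qh else some ⟨z.1, h⟩ with hψ
  set π : InvPt X p → X := fun w => match w with
    | none => p
    | some z => z.1 with hπ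
  set F : InvPt X q → X := fun u => π (g (ψ u)) with hF
  have sandwich := kernel_sandwich p L hL g hgbl
  have hψph : ψ ph = qh := by simp [hψ, hph]
  have hFph : F ph = p := by
    rw [hF]
    show π (g (ψ ph)) = p
    rw [hψph, hgq]
  have hψne : ∀ u : InvPt X q, u ≠ ph → ψ u ≠ qh := by
    intro u hu
    cases u with
    | none => simp [hψ, hqh]; intro h; cases h
    | some z =>
        have hz : z.1 ≠ p := by
          intro h
          exact hu (by rw [hph]; exact congrArg some (Subtype.ext h))
        simp only [hψ, dif_neg hz, hqh]
        intro hcontra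
        erw [dif_neg hz] at hcontra
        exact z.2 (congrArg Subtype.val (Option.some.inj hcontra))
  have hgne : ∀ w : InvPt X p, w ≠ qh → ∃ y, g w = some y := by
    intro w hw
    cases hgw : g w with
    | none => exact absurd (hgbij.1 (hgw.trans hgq.symm)) hw
    | some y => exact ⟨y, rfl⟩
  -- distance to p of the image point
  have hdistp : ∀ (u : InvPt X q), u ≠ ph → ∀ y, g (ψ u) = some y →
      (4*L)⁻¹ * invPtKernel p (ψ u) qh ≤ 1 / dist y.1 p ∧
        1 / dist y.1 p ≤ (4*L) * invPtKernel p (ψ u) qh := by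
    intro u hu y hy
    have := sandwich (ψ u) qh
    rw [hgq, hy] at this
    exact this
  have hκpos : ∀ u : InvPt X q, u ≠ ph → 0 < invPtKernel p (ψ u) qh := by
    intro u hu
    cases u with
    | none =>
        show (0:ℝ) < 1 / dist q p
        have : (0:ℝ) < dist q p := dist_pos.2 hqp
        positivity
    | some z =>
        have hz : z.1 ≠ p := by
          intro h
          exact hu (by rw [hph]; exact congrArg some (Subtype.ext h))
        have h1 : (0:ℝ) < dist z.1 p := dist_pos.2 hz
        have h2 : (0:ℝ) < dist q p := dist_pos.2 hqp
        have h3 : (0:ℝ) < dist z.1 q := dist_pos.2 z.2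
        show (0:ℝ) < invPtKernel p (if h : z.1 = p then qh else some ⟨z.1, h⟩) qh
        erw [dif_neg hz]
        show (0:ℝ) < dist z.1 q / (dist z.1 p * dist q p)
        positivity
  -- identity 1
  have iden1 : ∀ u : InvPt X q, u ≠ ph →
      invPtKernel p (ψ u) qh * (dist p q ^ 2 * invPtKernel q u ph) = 1 := by
    intro u hu
    have h2 : (0:ℝ) < dist q p := dist_pos.2 hqp
    cases u with
    | none =>
        show (1 / dist q p) * (dist p q ^2 * (1 / dist p q)) = 1
        rw [dist_comm q p]
        field_simp
    | some z =>
        have hz : z.1 ≠ p := by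
          intro h
          exact hu (by rw [hph]; exact congrArg some (Subtype.ext h))
        have h1 : (0:ℝ) < dist z.1 p := dist_pos.2 hz
        have h3 : (0:ℝ) < dist z.1 q := dist_pos.2 z.2
        show invPtKernel p (if h : z.1 = p then qh else some ⟨z.1, h⟩) qh
            * (dist p q ^ 2 * invPtKernel q (some z) ph) = 1
        erw [dif_neg hz]
        show (dist z.1 q / (dist z.1 p * dist q p))
            * (dist p q ^2 * (dist z.1 p / (dist z.1 q * dist p q))) = 1
        rw [dist_comm q p]
        field_simp
  -- identity 2
  have iden2 : ∀ u v : InvPt X q, u ≠ ph → v ≠ ph →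
      invPtKernel p (ψ u) (ψ v)
        = dist p q ^ 2 * invPtKernel q u v
            * (invPtKernel p (ψ u) qh * invPtKernel p (ψ v) qh) := by
    intro u v hu hv
    have h2 : (0:ℝ) < dist q p := dist_pos.2 hqp
    cases u with
    | none =>
        cases v with
        | none =>
            show (0:ℝ) = dist p q ^2 * 0 * _
            ring
        | some w =>
            have hw : w.1 ≠ p := by
              intro h
              exact hv (by rw [hph]; exact congrArg some (Subtype.ext h))
            have h1 : (0:ℝ) < dist w.1 p := dist_pos.2 hw
            have h3 : (0:ℝ) < dist w.1 q := dist_pos.2 w.2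
            show invPtKernel p none (if h : w.1 = p then qh else some ⟨w.1, h⟩)
              = dist p q ^2 * invPtKernel q none (some w)
                * (invPtKernel p none qh *
                    invPtKernel p (if h : w.1 = p then qh else some ⟨w.1, h⟩) qh)
            erw [dif_neg hw]
            show (1 / dist w.1 p)
              = dist p q ^2 * (1 / dist w.1 q)
                * ((1 / dist q p) * (dist w.1 q / (dist w.1 p * dist q p)))
            rw [dist_comm q p]
            field_simp
    | some z =>
        have hz : z.1 ≠ p := by
          intro h
          exact hu (by rw [hph]; exact congrArg some (Subtype.ext h))
        have h1 : (0:ℝ) < dist z.1 p := dist_pos.2 hz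
        have h3 : (0:ℝ) < dist z.1 q := dist_pos.2 z.2
        cases v with
        | none =>
            show invPtKernel p (if h : z.1 = p then qh else some ⟨z.1, h⟩) none
              = dist p q ^2 * invPtKernel q (some z) none
                * (invPtKernel p (if h : z.1 = p then qh else some ⟨z.1, h⟩) qh
                   * invPtKernel p none qh)
            erw [dif_neg hz]
            show (1 / dist z.1 p)
              = dist p q ^2 * (1 / dist z.1 q)
                * ((dist z.1 q / (dist z.1 p * dist q p)) * (1 / dist q p))
            rw [dist_comm q p]
            field_simp
        | some w =>
            have hw : w.1 ≠ p := by
              intro h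
              exact hv (by rw [hph]; exact congrArg some (Subtype.ext h))
            have h4 : (0:ℝ) < dist w.1 p := dist_pos.2 hw
            have h5 : (0:ℝ) < dist w.1 q := dist_pos.2 w.2
            show invPtKernel p (if h : z.1 = p then qh else some ⟨z.1, h⟩)
                 (if h : w.1 = p then qh else some ⟨w.1, h⟩)
              = dist p q ^2 * invPtKernel q (some z) (some w)
                * (invPtKernel p (if h : z.1 = p then qh else some ⟨z.1, h⟩) qh
                   * invPtKernel p (if h : w.1 = p then qh else some ⟨w.1, h⟩) qh)
            erw [dif_neg hz, dif_neg hw]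
            show dist z.1 w.1 / (dist z.1 p * dist w.1 p)
              = dist p q ^2 * (dist z.1 w.1 / (dist z.1 q * dist w.1 q))
                * ((dist z.1 q / (dist z.1 p * dist q p))
                   * (dist w.1 q / (dist w.1 p * dist q p)))
            rw [dist_comm q p]
            field_simp
  have h4L : (0:ℝ) < 4*L := by linarith
  have inv_helper₁ : ∀ c x : ℝ, 0 < c → c⁻¹ * x ≤ 1 → x ≤ c := by
    intro c x hc h
    have := mul_le_mul_of_nonneg_left h hc.le
    rwa [mul_one, ← mul_assoc, mul_inv_cancel₀ hc.ne', one_mul] at this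
  have inv_helper₂ : ∀ c x : ℝ, 0 < c → 1 ≤ c * x → c⁻¹ ≤ x := by
    intro c x hc h
    have := mul_le_mul_of_nonneg_left h (inv_nonneg.2 hc.le)
    rwa [mul_one, ← mul_assoc, inv_mul_cancel₀ hc.ne', one_mul] at this
  -- product form of the distance-to-p estimates
  have hprod : ∀ (u : InvPt X q), u ≠ ph → ∀ y, g (ψ u) = some y →
      (4*L)⁻¹ ≤ invPtKernel p (ψ u) qh * dist y.1 p ∧
        invPtKernel p (ψ u) qh * dist y.1 p ≤ 4*L := by
    intro u hu y hy
    have hdu := hdistp u hu y hy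
    have hyp : (0:ℝ) < dist y.1 p := dist_pos.2 y.2
    constructor
    · have h := mul_le_mul_of_nonneg_right hdu.2 hyp.le
      rw [one_div, inv_mul_cancel₀ hyp.ne'] at h
      refine inv_helper₂ _ _ h4L ?_
      calc (1:ℝ) ≤ 4*L * invPtKernel p (ψ u) qh * dist y.1 p := h
        _ = 4*L * (invPtKernel p (ψ u) qh * dist y.1 p) := by ring
    · have h := mul_le_mul_of_nonneg_right hdu.1 hyp.le
      rw [one_div, inv_mul_cancel₀ hyp.ne'] at h
      refine inv_helper₁ _ _ h4L ?_
      calc (4*L)⁻¹ * (invPtKernel p (ψ u) qh * dist y.1 p)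
          = (4*L)⁻¹ * invPtKernel p (ψ u) qh * dist y.1 p := by ring
        _ ≤ 1 := h
  -- main estimate, case: both points differ from ph
  have bound_pair : ∀ u v : InvPt X q, u ≠ ph → v ≠ ph →
      (64*L^3)⁻¹ * (dist p q ^ 2 * invPtKernel q u v) ≤ dist (F u) (F v) ∧
      dist (F u) (F v) ≤ (64*L^3) * (dist p q ^ 2 * invPtKernel q u v) := by
    intro u v hu hv
    obtain ⟨y, hy⟩ := hgne (ψ u) (hψne u hu)
    obtain ⟨y', hy'⟩ := hgne (ψ v) (hψne v hv)
    have hFu : F u = y.1 := by rw [hF]; show π (g (ψ u)) = y.1; rw [hy]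
    have hFv : F v = y'.1 := by rw [hF]; show π (g (ψ v)) = y'.1; rw [hy']
    have hyp : (0:ℝ) < dist y.1 p := dist_pos.2 y.2
    have hy'p : (0:ℝ) < dist y'.1 p := dist_pos.2 y'.2
    have hκu0 : 0 < invPtKernel p (ψ u) qh := hκpos u hu
    have hκv0 : 0 < invPtKernel p (ψ v) qh := hκpos v hv
    set κu := invPtKernel p (ψ u) qh
    set κv := invPtKernel p (ψ v) qh
    set a := dist y.1 p
    set b := dist y'.1 p
    have hpu := hprod u hu y hy
    have hpv := hprod v hv y' hy'
    have hK := sandwich (ψ u) (ψ v)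
    rw [hy, hy'] at hK
    set K := invPtKernel p (some y : InvPt X p) (some y') with hKdef
    set A := invPtKernel p (ψ u) (ψ v) with hAdef
    have hK0 : 0 ≤ K := invPtKernel_nonneg p _ _
    have hA0 : 0 ≤ A := invPtKernel_nonneg p _ _
    set T := dist p q ^ 2 * invPtKernel q u v with hTdef
    have hT0 : 0 ≤ T := mul_nonneg (by positivity) (invPtKernel_nonneg q u v)
    have hA : A = T * (κu * κv) := iden2 u v hu hv
    have hdist_eq : dist (F u) (F v) = K * (a * b) := by
      rw [hFu, hFv, hKdef]
      show dist y.1 y'.1 = dist y.1 y'.1 / (dist y.1 p * dist y'.1 p) * (a*b)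
      field_simp
      rw [mul_assoc, mul_div_assoc, show a * b / (dist y.1 p * dist y'.1 p) = 1 from div_self (mul_pos hyp hy'p).ne', mul_one]
    have hcancelpos : 0 < κu * κv := mul_pos hκu0 hκv0
    constructor
    · -- lower bound
      rw [hdist_eq]
      refine le_of_mul_le_mul_right ?_ hcancelpos
      have e1 : K * (a * b) * (κu * κv) = K * ((κu * a) * (κv * b)) := by ring
      have e2 : (64*L^3)⁻¹ * T * (κu * κv)
          = ((4*L)⁻¹ * A) * ((4*L)⁻¹ * (4*L)⁻¹) := by
        have hLne : L ≠ 0 := hL0.ne'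
        rw [hA, show ((64:ℝ)*L^3)⁻¹ = (4*L)⁻¹*((4*L)⁻¹*(4*L)⁻¹) from by
          field_simp; ring]
        ring
      calc (64*L^3)⁻¹ * (dist p q ^ 2 * invPtKernel q u v) * (κu * κv)
          = (64*L^3)⁻¹ * T * (κu * κv) := by rw [hTdef]
        _ = ((4*L)⁻¹ * A) * ((4*L)⁻¹ * (4*L)⁻¹) := e2
        _ ≤ K * ((κu * a) * (κv * b)) := by
            apply mul_le_mul hK.1 ?_ (by positivity) hK0
            exact mul_le_mul hpu.1 hpv.1 (by positivity) (by positivity)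
        _ = K * (a * b) * (κu * κv) := by ring
    · -- upper bound
      rw [hdist_eq]
      refine le_of_mul_le_mul_right ?_ hcancelpos
      have e2 : (64*L^3) * T * (κu * κv)
          = ((4*L) * A) * ((4*L) * (4*L)) := by
        rw [hA]; ring
      calc K * (a * b) * (κu * κv)
          = K * ((κu * a) * (κv * b)) := by ring
        _ ≤ ((4*L) * A) * ((4*L) * (4*L)) := by
            apply mul_le_mul hK.2 ?_ ?_ (by positivity)
            · exact mul_le_mul hpu.2 hpv.2 (by positivity) (by linarith)
            · positivity
        _ = (64*L^3) * T * (κu * κv) := e2.symm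
        _ = (64*L^3) * (dist p q ^ 2 * invPtKernel q u v) * (κu * κv) := by rw [hTdef]
  -- mixed bound: second point is ph
  have bound_mixed : ∀ u : InvPt X q, u ≠ ph →
      (64*L^3)⁻¹ * (dist p q ^ 2 * invPtKernel q u ph) ≤ dist (F u) (F ph) ∧
      dist (F u) (F ph) ≤ (64*L^3) * (dist p q ^ 2 * invPtKernel q u ph) := by
    intro u hu
    obtain ⟨y, hy⟩ := hgne (ψ u) (hψne u hu)
    have hFu : F u = y.1 := by rw [hF]; show π (g (ψ u)) = y.1; rw [hy]
    have hyp : (0:ℝ) < dist y.1 p := dist_pos.2 y.2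
    have hκu0 : 0 < invPtKernel p (ψ u) qh := hκpos u hu
    have hpu := hprod u hu y hy
    have hI := iden1 u hu
    set κu := invPtKernel p (ψ u) qh
    set T := dist p q ^ 2 * invPtKernel q u ph with hTdef
    have hT0 : 0 ≤ T := mul_nonneg (by positivity) (invPtKernel_nonneg q u ph)
    have hdist_eq : dist (F u) (F ph) = dist y.1 p := by rw [hFu, hFph]
    -- from hI : κu * T = 1 we get T = κu⁻¹ and hence bounds
    have hTpos : 0 < T := by
      rcases lt_or_eq_of_le hT0 with h | h
      · exact h
      · exfalso; rw [← h, mul_zero] at hI; norm_num at hI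
    have ha_eq : dist y.1 p = (κu * dist y.1 p) * T := by
      have h : (κu * dist y.1 p) * T = (κu * T) * dist y.1 p := by ring
      rw [h, hI, one_mul]
    have hcube : (0:ℝ) ≤ L*(L-1)*(L+1) :=
      mul_nonneg (mul_nonneg hL0.le (by linarith)) (by linarith)
    have hconst2 : (4*L : ℝ) ≤ 64*L^3 := by nlinarith [hcube]
    have hconst1 : (64*L^3 : ℝ)⁻¹ ≤ (4*L)⁻¹ := by
      apply inv_anti₀ h4L
      exact hconst2
    constructor
    · rw [hdist_eq, ha_eq, hTdef] at *
      calc (64*L^3)⁻¹ * (dist p q ^ 2 * invPtKernel q u ph)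
          ≤ (4*L)⁻¹ * (dist p q ^ 2 * invPtKernel q u ph) :=
            mul_le_mul_of_nonneg_right hconst1 hT0
        _ ≤ (κu * dist y.1 p) * (dist p q ^ 2 * invPtKernel q u ph) :=
            mul_le_mul_of_nonneg_right hpu.1 hT0
    · rw [hdist_eq, ha_eq, hTdef] at *
      calc (κu * dist y.1 p) * (dist p q ^ 2 * invPtKernel q u ph)
          ≤ (4*L) * (dist p q ^ 2 * invPtKernel q u ph) :=
            mul_le_mul_of_nonneg_right hpu.2 hT0
        _ ≤ (64*L^3) * (dist p q ^ 2 * invPtKernel q u ph) :=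
            mul_le_mul_of_nonneg_right hconst2 hT0
  -- full estimate
  have main : ∀ u v : InvPt X q,
      (64*L^3)⁻¹ * (dist p q ^ 2 * invPtKernel q u v) ≤ dist (F u) (F v) ∧
      dist (F u) (F v) ≤ (64*L^3) * (dist p q ^ 2 * invPtKernel q u v) := by
    intro u v
    by_cases hu : u = ph
    · by_cases hv : v = ph
      · subst hu; subst hv
        rw [dist_self, invPtKernel_self]
        constructor <;> simp
      · subst hu
        have h := bound_mixed v hv
        rw [dist_comm (F v) (F ph), invPtKernel_symm q v ph] at h
        exact h
    · by_cases hv : v = ph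
      · subst hv
        exact bound_mixed u hu
      · exact bound_pair u v hu hv
  refine ⟨F, ⟨?_, ?_⟩, main⟩
  · -- injective
    intro u v huv
    have h0 : dist (F u) (F v) = 0 := by rw [huv, dist_self]
    have hlow := (main u v).1
    have hker0 : invPtKernel q u v = 0 := by
      by_contra hne
      have hkpos : 0 < invPtKernel q u v :=
        lt_of_le_of_ne (invPtKernel_nonneg q u v) (Ne.symm hne)
      have hc1 : (0:ℝ) < (64*L^3)⁻¹ :=
        inv_pos.2 (mul_pos (by norm_num) (pow_pos hL0 3))
      have hcc : 0 < (64*L^3)⁻¹ * (dist p q ^ 2 * invPtKernel q u v) :=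
        mul_pos hc1 (mul_pos (pow_pos hdpq 2) hkpos)
      rw [h0] at hlow
      linarith
    exact eq_of_invPtKernel_eq_zero q hker0
  · -- surjective
    intro a
    by_cases ha : a = p
    · exact ⟨ph, by rw [hFph, ha]⟩
    · obtain ⟨w, hw⟩ := hgbij.2 (some ⟨a, ha⟩ : InvPt X p)
      have hwne : w ≠ qh := by
        intro h
        rw [h, hgq] at hw
        cases hw
      cases w with
      | none =>
          refine ⟨none, ?_⟩
          rw [hF]
          show π (g (ψ none)) = a
          show π (g none) = a
          rw [hw]
      | some z =>
          have hzq : z.1 ≠ q := by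
            intro h
            exact hwne (congrArg some (Subtype.ext h))
          refine ⟨some ⟨z.1, hzq⟩, ?_⟩
          rw [hF]
          show π (g (ψ (some ⟨z.1, hzq⟩))) = a
          have hψz : ψ (some ⟨z.1, hzq⟩) = some z := by
            show (if h : z.1 = p then qh else some ⟨z.1, h⟩) = some z
            erw [dif_neg z.2]
          rw [hψz, hw]

end IIBLH

open IIBLH

/-- If a proper, connected metric space `X` is `L`-inversion-invariant
bi-Lipschitz homogeneous (both `X` and every inversion `X*_p` are
`L`-bi-Lipschitz homogeneous), then `X` is quasi-self-similar: there are
`M = M(L) ≥ 1` and a basepoint `x` such that for every `s ≥ 1` there is an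
`M`-bi-Lipschitz self-homeomorphism `(X, s·d, x) → (X, d, x)` fixing `x`. -/
theorem inversion_invariant_blh_implies_quasi_self_similar
    {X : Type*} [MetricSpace X] [ProperSpace X] [Nonempty X] [ConnectedSpace X]
    (L : ℝ) (hL : 1 ≤ L)
    (hhomX : ∀ x y : X, ∃ g : X → X, Function.Bijective g ∧ g x = y ∧
      ∀ u v : X, L⁻¹ * dist u v ≤ dist (g u) (g v) ∧ dist (g u) (g v) ≤ L * dist u v)
    (hhomInv : ∀ p : X, ∀ u v : InvPt X p, ∃ g : InvPt X p → InvPt X p,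
      Function.Bijective g ∧ g u = v ∧
      ∀ a b : InvPt X p,
        L⁻¹ * invPtDist p a b ≤ invPtDist p (g a) (g b) ∧
          invPtDist p (g a) (g b) ≤ L * invPtDist p a b) :
    ∃ M : ℝ, 1 ≤ M ∧ ∃ x : X, ∀ s : ℝ, 1 ≤ s →
      ∃ f : X → X, Function.Bijective f ∧ f x = x ∧
        ∀ a b : X, M⁻¹ * (s * dist a b) ≤ dist (f a) (f b) ∧
          dist (f a) (f b) ≤ M * (s * dist a b) := by
  classical
  have hL0 : (0:ℝ) < L := by linarith
  obtain ⟨q⟩ := ‹Nonempty X›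
  -- intermediate value helper
  have ivt : ∀ (c z : X) (r : ℝ), 0 ≤ r → r ≤ dist c z → ∃ y : X, dist c y = r := by
    intro c z r h0 hr
    have hcont : Continuous fun y : X => dist c y := continuous_const.dist continuous_id
    have hsub := intermediate_value_univ c z hcont
    simp only [dist_self] at hsub
    obtain ⟨y, hy⟩ := hsub ⟨h0, hr⟩
    exact ⟨y, hy⟩
  by_cases hsub : ∀ a b : X, a = b
  · refine ⟨1, le_refl 1, q, fun s hs => ⟨id, Function.bijective_id, rfl, fun a b => ?_⟩⟩
    have hab : a = b := hsub a b
    subst hab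
    simp
  · push_neg at hsub
    obtain ⟨a0, b0, hab⟩ := hsub
    by_cases hbd : ∃ C : ℝ, ∀ z w : X, dist z w ≤ C
    · -- bounded nontrivial: contradiction with homogeneity of the inversion
      exfalso
      obtain ⟨C, hC⟩ := hbd
      have hb0 : b0 ≠ a0 := Ne.symm hab
      have hδ0 : (0:ℝ) < dist b0 a0 := dist_pos.2 hb0
      set δ := dist b0 a0 with hδ
      have hC0 : 0 < C := lt_of_lt_of_le hδ0 (hC b0 a0)
      have h16 : (0:ℝ) < 16*L*C := by positivity
      set r := min (δ/2) (δ^2/(16*L*C)) with hrdef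
      have hr0 : 0 < r := lt_min (by linarith) (div_pos (pow_pos hδ0 2) h16)
      have hrδ : r ≤ δ/2 := min_le_left _ _
      have hr2 : r ≤ δ^2/(16*L*C) := min_le_right _ _
      obtain ⟨y, hy⟩ := ivt b0 a0 r hr0.le (by rw [← hδ]; linarith)
      have hyb : y ≠ b0 := by
        intro h; rw [h, dist_self] at hy; linarith
      have hya : y ≠ a0 := by
        intro h; rw [h, ← hδ] at hy; linarith
      obtain ⟨g, hgbij, hgx, hgbl⟩ := hhomInv a0 (some ⟨b0, hb0⟩) none
      have hyd : δ/2 ≤ dist y a0 := by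
        have ht := dist_triangle b0 y a0
        rw [hy] at ht
        linarith
      have hkernel : invPtKernel a0 (some ⟨b0,hb0⟩ : InvPt X a0) (some ⟨y,hya⟩) ≤ 2*r/δ^2 := by
        show dist b0 y / (dist b0 a0 * dist y a0) ≤ 2*r/δ^2
        rw [hy, ← hδ]
        have hden : δ^2/2 ≤ δ * dist y a0 := by nlinarith
        have hd2 : (0:ℝ) < δ^2/2 := by positivity
        calc r / (δ * dist y a0) ≤ r / (δ^2/2) :=
              div_le_div_of_nonneg_left hr0.le hd2 hden
          _ = 2*r/δ^2 := by field_simp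
      have hd1 : invPtDist a0 (some ⟨b0,hb0⟩ : InvPt X a0) (some ⟨y,hya⟩) ≤ 2*r/δ^2 :=
        le_trans (invPtDist_le_kernel a0 _ _) hkernel
      have hup := (hgbl (some ⟨b0,hb0⟩) (some ⟨y,hya⟩)).2
      rw [hgx] at hup
      have hne : g (some ⟨y,hya⟩) ≠ none := by
        intro h
        have : (some ⟨y,hya⟩ : InvPt X a0) = some ⟨b0,hb0⟩ := hgbij.1 (h.trans hgx.symm)
        exact hyb (congrArg Subtype.val (Option.some.inj this))
      obtain ⟨w, hw⟩ : ∃ w, g (some ⟨y,hya⟩) = some w := by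
        cases hgw : g (some ⟨y,hya⟩) with
        | none => exact absurd hgw hne
        | some w => exact ⟨w, rfl⟩
      rw [hw] at hup
      have hlow := kernel_le_four_invPtDist a0 (none : InvPt X a0) (some w)
      have hwC : dist w.1 a0 ≤ C := hC _ _
      have hw0 : 0 < dist w.1 a0 := dist_pos.2 w.2
      have hker : invPtKernel a0 (none : InvPt X a0) (some w) = 1 / dist w.1 a0 := rfl
      rw [hker] at hlow
      have h1 : 1/C ≤ 1/dist w.1 a0 := one_div_le_one_div_of_le hw0 hwC
      -- combine
      have hLd : L * invPtDist a0 (some ⟨b0,hb0⟩ : InvPt X a0) (some ⟨y,hya⟩)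
          ≤ L * (2*r/δ^2) := mul_le_mul_of_nonneg_left hd1 hL0.le
      have hdd0 : 0 ≤ invPtDist a0 (none : InvPt X a0) (some w) :=
        invPtDist_nonneg a0 _ _
      have hchain : 1/C ≤ 4*(L*(2*r/δ^2)) := by
        calc 1/C ≤ 1/dist w.1 a0 := h1
          _ ≤ 4 * invPtDist a0 (none : InvPt X a0) (some w) := hlow
          _ ≤ 4 * (L * invPtDist a0 (some ⟨b0,hb0⟩ : InvPt X a0) (some ⟨y,hya⟩)) := by
              linarith
          _ ≤ 4*(L*(2*r/δ^2)) := by linarith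
      -- but r ≤ δ²/(16LC) forces 4*(L*(2r/δ²)) ≤ 1/(2C)
      have hrr : r * (16*L*C) ≤ δ^2 := by
        rw [← le_div_iff₀ h16]
        exact hr2
      have hfin : 4*(L*(2*r/δ^2)) ≤ 1/(2*C) := by
        have he : 4*(L*(2*r/δ^2)) = (8*L*r)/δ^2 := by ring
        rw [he, div_le_div_iff₀ (by positivity) (by linarith : (0:ℝ) < 2*C)]
        nlinarith
      have : 1/C ≤ 1/(2*C) := le_trans hchain hfin
      rw [div_le_div_iff₀ hC0 (by linarith : (0:ℝ) < 2*C)] at this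
      linarith
    · -- unbounded case: the main construction
      push_neg at hbd
      have hunb : ∀ r : ℝ, ∃ z : X, r ≤ dist q z := by
        intro r
        obtain ⟨z, w, hzw⟩ := hbd (2*|r|)
        rcases le_total r (dist q z) with h | h
        · exact ⟨z, h⟩
        · refine ⟨w, ?_⟩
          have ht := dist_triangle z q w
          have h1 : r ≤ |r| := le_abs_self r
          have h2 : dist q z ≤ |r| := le_trans h (le_abs_self r)
          have h3 : dist z q = dist q z := dist_comm _ _
          linarith
      have exists_at : ∀ r : ℝ, 0 ≤ r → ∃ y : X, dist q y = r := by
        intro r h0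
        obtain ⟨z, hz⟩ := hunb r
        exact ivt q z r h0 hz
      have hc0 : (0:ℝ) < 64*L^3 := mul_pos (by norm_num) (pow_pos hL0 3)
      refine ⟨L * (64*L^3)^2, ?_, q, ?_⟩
      · have h7 : (1:ℝ) ≤ L^7 := one_le_pow₀ hL
        calc (1:ℝ) ≤ 4096*L^7 := by linarith
          _ = L*(64*L^3)^2 := by ring
      intro s hs
      have hs0 : (0:ℝ) ≤ s := by linarith
      obtain ⟨p, hp⟩ := exists_at 1 (by norm_num)
      obtain ⟨p', hp'⟩ := exists_at (Real.sqrt s) (Real.sqrt_nonneg s)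
      have hsq1 : 1 ≤ Real.sqrt s := Real.one_le_sqrt.2 hs
      have hqp : q ≠ p := by
        intro h; rw [h, dist_self] at hp; norm_num at hp
      have hqp' : q ≠ p' := by
        intro h; rw [h, dist_self] at hp'; linarith
      obtain ⟨g₁, hg₁bij, hg₁q, hg₁bl⟩ := hhomInv p (some ⟨q, hqp⟩) none
      obtain ⟨F₁, hF₁bij, hF₁⟩ := core L hL hqp g₁ hg₁bij hg₁q hg₁bl
      obtain ⟨g₂, hg₂bij, hg₂q, hg₂bl⟩ := hhomInv p' (some ⟨q, hqp'⟩) none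
      obtain ⟨F₂, hF₂bij, hF₂⟩ := core L hL hqp' g₂ hg₂bij hg₂q hg₂bl
      have hdpq : dist p q = 1 := by rw [dist_comm]; exact hp
      have hdp'q : dist p' q ^ 2 = s := by
        rw [dist_comm, hp']; exact Real.sq_sqrt hs0
      set e₁ := Equiv.ofBijective F₁ hF₁bij with he₁
      set H : X → X := fun x => F₂ (e₁.symm x) with hH
      have hHbij : Function.Bijective H := hF₂bij.comp e₁.symm.bijective
      obtain ⟨φ, hφbij, hφfix, hφbl⟩ := hhomX (H q) q
      refine ⟨φ ∘ H, hφbij.comp hHbij, hφfix, fun a b => ?_⟩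
      have ha : F₁ (e₁.symm a) = a := e₁.apply_symm_apply a
      have hb : F₁ (e₁.symm b) = b := e₁.apply_symm_apply b
      have h1 := hF₁ (e₁.symm a) (e₁.symm b)
      have h2 := hF₂ (e₁.symm a) (e₁.symm b)
      rw [ha, hb, hdpq, one_pow, one_mul] at h1
      rw [hdp'q] at h2
      set i := invPtKernel q (e₁.symm a) (e₁.symm b) with hi
      have hi0 : 0 ≤ i := invPtKernel_nonneg q _ _
      -- bounds for i in terms of dist a b
      have hiup : i ≤ (64*L^3) * dist a b := by
        have h := mul_le_mul_of_nonneg_left h1.1 hc0.le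
        rwa [← mul_assoc, mul_inv_cancel₀ hc0.ne', one_mul] at h
      have hilow : (64*L^3)⁻¹ * dist a b ≤ i := by
        have h := mul_le_mul_of_nonneg_left h1.2 (inv_nonneg.2 hc0.le)
        rwa [← mul_assoc, inv_mul_cancel₀ hc0.ne', one_mul] at h
      have hDab : dist (H a) (H b) = dist (F₂ (e₁.symm a)) (F₂ (e₁.symm b)) := rfl
      have hup' : dist (H a) (H b) ≤ (64*L^3)^2 * (s * dist a b) := by
        rw [hDab]
        calc dist (F₂ (e₁.symm a)) (F₂ (e₁.symm b)) ≤ (64*L^3) * (s * i) := h2.2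
          _ ≤ (64*L^3) * (s * ((64*L^3) * dist a b)) := by
              apply mul_le_mul_of_nonneg_left _ hc0.le
              exact mul_le_mul_of_nonneg_left hiup hs0
          _ = (64*L^3)^2 * (s * dist a b) := by ring
      have hlow' : ((64*L^3)^2)⁻¹ * (s * dist a b) ≤ dist (H a) (H b) := by
        rw [hDab]
        calc ((64*L^3)^2)⁻¹ * (s * dist a b)
            = (64*L^3)⁻¹ * (s * ((64*L^3)⁻¹ * dist a b)) := by
              rw [sq, mul_inv]; ring
          _ ≤ (64*L^3)⁻¹ * (s * i) := by
              apply mul_le_mul_of_nonneg_left _ (inv_nonneg.2 hc0.le)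
              exact mul_le_mul_of_nonneg_left hilow hs0
          _ ≤ dist (F₂ (e₁.symm a)) (F₂ (e₁.symm b)) := h2.1
      have hφ := hφbl (H a) (H b)
      constructor
      · calc (L * (64*L^3)^2)⁻¹ * (s * dist a b)
            = L⁻¹ * (((64*L^3)^2)⁻¹ * (s * dist a b)) := by
              rw [mul_inv]; ring
          _ ≤ L⁻¹ * dist (H a) (H b) :=
              mul_le_mul_of_nonneg_left hlow' (inv_nonneg.2 hL0.le)
          _ ≤ dist ((φ ∘ H) a) ((φ ∘ H) b) := hφ.1
      · calc dist ((φ ∘ H) a) ((φ ∘ H) b) ≤ L * dist (H a) (H b) := hφ.2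
          _ ≤ L * ((64*L^3)^2 * (s * dist a b)) :=
              mul_le_mul_of_nonneg_left hup' hL0.le
          _ = L * (64*L^3)^2 * (s * dist a b) := by ring
end

section
/- Let X be a proper metric space, x ∈ X, M ≥ 1, and r > 1. Suppose for every n ∈ ℕ there is an M-bi-Lipschitz embedding fₙ : B_{rd}(x; n) → (X, d) with fₙ(x) = x, where B_{rd}(x;n) = {y : r·d(x,y) < n}. Then there exists an M-bi-Lipschitz map F : (X, r·d) → (X, d) with F(x) = x, obtained as a locally uniform limit of a subsequence via Arzelà–Ascoli and a diagonal argument. -/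
open Metric Filter Topology

/-- Compactness principle: if `X` is proper and for every `n` there is an
`M`-bi-Lipschitz embedding `fₙ : B_{rd}(x;n) → (X,d)` fixing `x` (bi-Lipschitz
from the rescaled distance `r·d`), then there is a globally defined
`M`-bi-Lipschitz map `F : (X, r·d) → (X, d)` fixing `x`. -/
theorem biLipschitz_limit_of_exhausting_embeddings
    {X : Type*} [MetricSpace X] [ProperSpace X]
    (x : X) (M r : ℝ) (hM : 1 ≤ M) (hr : 1 < r)
    (f : ℕ → X → X)
    (hfix : ∀ n : ℕ, f n x = x)
    (hbil : ∀ n : ℕ, ∀ u v : X, r * dist x u < n → r * dist x v < n →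
      M⁻¹ * (r * dist u v) ≤ dist (f n u) (f n v) ∧
        dist (f n u) (f n v) ≤ M * (r * dist u v)) :
    ∃ F : X → X, F x = x ∧
      ∀ u v : X, M⁻¹ * (r * dist u v) ≤ dist (F u) (F v) ∧
        dist (F u) (F v) ≤ M * (r * dist u v) := by
  classical
  set φ : Ultrafilter ℕ := hyperfilter ℕ with hφ
  have hcof : (φ : Filter ℕ) ≤ cofinite := hyperfilter_le_cofinite
  have hatTop : (φ : Filter ℕ) ≤ atTop := by
    rw [← Nat.cofinite_eq_atTop]; exact hcof
  -- eventual big n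
  have hev : ∀ u : X, ∀ᶠ (n : ℕ) in (φ : Filter ℕ), r * dist x u < (n : ℝ) := by
    intro u
    apply hatTop
    obtain ⟨N, hN⟩ := exists_nat_gt (r * dist x u)
    filter_upwards [eventually_ge_atTop N] with n hn
    exact hN.trans_le (by exact_mod_cast hn)
  -- limits exist
  have hlim : ∀ u : X, ∃ y, Tendsto (fun n => f n u) (φ : Filter ℕ) (𝓝 y) := by
    intro u
    set K := closedBall x (M * (r * dist x u)) with hK
    have hKc : IsCompact K := isCompact_closedBall _ _
    have hmem : ∀ᶠ n in (φ : Filter ℕ), f n u ∈ K := by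
      filter_upwards [hev u, hev x] with n hn hnx
      have h := (hbil n x u hnx hn).2
      rw [hfix n] at h
      exact mem_closedBall'.mpr h
    obtain ⟨y, _, hy⟩ := hKc.ultrafilter_le_nhds (φ.map (fun n => f n u))
      (by rwa [Filter.le_principal_iff, Ultrafilter.coe_map, Filter.mem_map])
    exact ⟨y, hy⟩
  choose F hF using hlim
  refine ⟨F, ?_, ?_⟩
  · have : Tendsto (fun n => f n x) (φ : Filter ℕ) (𝓝 x) := by
      simp only [hfix]; exact tendsto_const_nhds
    exact tendsto_nhds_unique (hF x) this
  · intro u v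
    have hd : Tendsto (fun n => dist (f n u) (f n v)) (φ : Filter ℕ)
        (𝓝 (dist (F u) (F v))) := (hF u).dist (hF v)
    constructor
    · refine ge_of_tendsto hd ?_
      filter_upwards [hev u, hev v] with n hu hv
      exact (hbil n u v hu hv).1
    · refine le_of_tendsto hd ?_
      filter_upwards [hev u, hev v] with n hu hv
      exact (hbil n u v hu hv).2
end

section
/- Let X be a proper, connected metric space that is M-quasi-self-similar at a basepoint x (for every s ≥ 1 there is an M-bi-Lipschitz homeomorphism f_s : (X,s·d,x) → (X,d,x)), M-bi-Lipschitz homogeneous, and suppose some ball B(x;s) is contractible inside B(x;Cs) for constants s > 0, C ≥ 1. Then X is linearly locally contractible: every ball B(y;r) is contractible inside B(y; C·M⁴·r). -/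
open Metric Set

/-- If `X` is `M`-quasi-self-similar at `x`, `M`-bi-Lipschitz homogeneous, and
some ball `B(x;s)` is contractible inside `B(x;Cs)`, then `X` is linearly
locally contractible: every ball `B(y;r)` is contractible inside
`B(y; C·M⁴·r)`. -/
theorem linearly_locally_contractible_of_qss_and_homogeneous
    {X : Type*} [MetricSpace X]
    (M : ℝ) (hM : 1 ≤ M) (x : X) (s C : ℝ) (hs : 0 < s) (hC : 1 ≤ C)
    (hqss : ∀ t : ℝ, 1 ≤ t → ∃ f : X → X, Function.Bijective f ∧ f x = x ∧
      ∀ a b : X, M⁻¹ * (t * dist a b) ≤ dist (f a) (f b) ∧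
        dist (f a) (f b) ≤ M * (t * dist a b))
    (hhom : ∀ y z : X, ∃ g : X → X, Function.Bijective g ∧ g y = z ∧
      ∀ a b : X, M⁻¹ * dist a b ≤ dist (g a) (g b) ∧ dist (g a) (g b) ≤ M * dist a b)
    (hcontr : ∃ H : ball x s × Icc (0 : ℝ) 1 → X, Continuous H ∧
      (∀ z : ball x s, H (z, ⟨0, by norm_num⟩) = (z : X)) ∧
      (∀ z : ball x s, H (z, ⟨1, by norm_num⟩) = x) ∧
      (∀ z : ball x s, ∀ t : Icc (0 : ℝ) 1, H (z, t) ∈ ball x (C * s))) :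
    ∀ (y : X) (r : ℝ), 0 < r →
      ∃ H : ball y r × Icc (0 : ℝ) 1 → X, Continuous H ∧
        (∀ z : ball y r, H (z, ⟨0, by norm_num⟩) = (z : X)) ∧
        (∀ z : ball y r, H (z, ⟨1, by norm_num⟩) = y) ∧
        (∀ z : ball y r, ∀ t : Icc (0 : ℝ) 1, H (z, t) ∈ ball y (C * M ^ 4 * r)) := by
  intro y r hr
  haveI : Nonempty X := ⟨x⟩
  have hM0 : (0 : ℝ) < M := lt_of_lt_of_le one_pos hM
  -- Step A: produce a bijection ψ with ψ y = x and
  -- (s/(M⁴r)) * dist a b ≤ dist (ψ a) (ψ b) ≤ (s/r) * dist a b.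
  obtain ⟨ψ, hψbij, hψy, hψd⟩ :
      ∃ ψ : X → X, Function.Bijective ψ ∧ ψ y = x ∧
        ∀ a b : X, s / (M ^ 4 * r) * dist a b ≤ dist (ψ a) (ψ b) ∧
          dist (ψ a) (ψ b) ≤ s / r * dist a b := by
    obtain ⟨g, hgbij, hgy, hgd⟩ := hhom y x
    by_cases hcase : s ≤ M ^ 2 * r
    · -- large radius: shrink using the inverse of f_t, t = M²r/s
      set t : ℝ := M ^ 2 * r / s with ht_def
      have ht0 : 0 < t := by positivity
      have ht : 1 ≤ t := (one_le_div hs).mpr hcase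
      have ht_eq : t * s = M ^ 2 * r := div_mul_cancel₀ _ (ne_of_gt hs)
      obtain ⟨f, hfbij, hfx, hfd⟩ := hqss t ht
      set finv : X → X := Function.invFun f with hfinv_def
      have hleft : Function.LeftInverse finv f := Function.leftInverse_invFun hfbij.1
      have hright : Function.RightInverse finv f := Function.rightInverse_invFun hfbij.2
      have hkey : ∀ a b : X, s / (M ^ 4 * r) * dist a b ≤ dist (finv (g a)) (finv (g b)) ∧
          dist (finv (g a)) (finv (g b)) ≤ s / r * dist a b := by
        intro a b
        set D := dist a b with hD
        set Dg := dist (g a) (g b) with hDg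
        set P := dist (finv (g a)) (finv (g b)) with hP
        have hDg0 : 0 ≤ Dg := dist_nonneg
        have hP0 : 0 ≤ P := dist_nonneg
        have hD0 : 0 ≤ D := dist_nonneg
        obtain ⟨hg1, hg2⟩ := hgd a b
        obtain ⟨hf1, hf2⟩ := hfd (finv (g a)) (finv (g b))
        rw [hright (g a), hright (g b)] at hf1 hf2
        -- A1 : t * P ≤ M * Dg ; B1 : D ≤ M * Dg
        have A1 : t * P ≤ M * Dg := by
          have h := mul_le_mul_of_nonneg_left hf1 hM0.le
          rwa [← mul_assoc, mul_inv_cancel₀ (ne_of_gt hM0), one_mul] at h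
        have B1 : D ≤ M * Dg := by
          have h := mul_le_mul_of_nonneg_left hg1 hM0.le
          rwa [← mul_assoc, mul_inv_cancel₀ (ne_of_gt hM0), one_mul] at h
        constructor
        · rw [div_mul_eq_mul_div, div_le_iff₀ (by positivity)]
          calc s * D ≤ s * (M * Dg) := by
                exact mul_le_mul_of_nonneg_left B1 hs.le
            _ ≤ s * (M * (M * (t * P))) := by
                exact mul_le_mul_of_nonneg_left (mul_le_mul_of_nonneg_left hf2 hM0.le) hs.le
            _ = (t * s) * (M ^ 2 * P) := by ring
            _ = (M ^ 2 * r) * (M ^ 2 * P) := by rw [ht_eq]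
            _ = P * (M ^ 4 * r) := by ring
        · rw [div_mul_eq_mul_div, le_div_iff₀ hr]
          have h4 : t * P ≤ M ^ 2 * D := by
            calc t * P ≤ M * Dg := A1
              _ ≤ M * (M * D) := mul_le_mul_of_nonneg_left hg2 hM0.le
              _ = M ^ 2 * D := by ring
          have h5 : t * (P * r) ≤ t * (s * D) := by
            calc t * (P * r) = r * (t * P) := by ring
              _ ≤ r * (M ^ 2 * D) := mul_le_mul_of_nonneg_left h4 hr.le
              _ = (M ^ 2 * r) * D := by ring
              _ = (t * s) * D := by rw [ht_eq]
              _ = t * (s * D) := by ring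
          exact le_of_mul_le_mul_left h5 ht0
      refine ⟨fun a => finv (g a), ?_, ?_, hkey⟩
      · exact Function.Bijective.comp
          ⟨Function.LeftInverse.injective hright, Function.RightInverse.surjective hleft⟩ hgbij
      · show finv (g y) = x
        rw [hgy]
        nth_rewrite 1 [← hfx]
        exact hleft x
    · -- small radius: expand using f_t, t = s/(M²r)
      push_neg at hcase
      set t : ℝ := s / (M ^ 2 * r) with ht_def
      have ht0 : 0 < t := by positivity
      have ht : 1 ≤ t := (one_le_div (by positivity)).mpr hcase.le
      have ht_eq : t * (M ^ 2 * r) = s := div_mul_cancel₀ _ (by positivity)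
      obtain ⟨f, hfbij, hfx, hfd⟩ := hqss t ht
      have hkey : ∀ a b : X, s / (M ^ 4 * r) * dist a b ≤ dist (f (g a)) (f (g b)) ∧
          dist (f (g a)) (f (g b)) ≤ s / r * dist a b := by
        intro a b
        set D := dist a b with hD
        set Dg := dist (g a) (g b) with hDg
        set P := dist (f (g a)) (f (g b)) with hP
        obtain ⟨hg1, hg2⟩ := hgd a b
        obtain ⟨hf1, hf2⟩ := hfd (g a) (g b)
        have A1 : t * Dg ≤ M * P := by
          have h := mul_le_mul_of_nonneg_left hf1 hM0.le
          rwa [← mul_assoc, mul_inv_cancel₀ (ne_of_gt hM0), one_mul] at h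
        have B1 : D ≤ M * Dg := by
          have h := mul_le_mul_of_nonneg_left hg1 hM0.le
          rwa [← mul_assoc, mul_inv_cancel₀ (ne_of_gt hM0), one_mul] at h
        constructor
        · rw [div_mul_eq_mul_div, div_le_iff₀ (by positivity)]
          calc s * D = (M ^ 2 * r) * (t * D) := by rw [← ht_eq]; ring
            _ ≤ (M ^ 2 * r) * (t * (M * Dg)) := by
                exact mul_le_mul_of_nonneg_left
                  (mul_le_mul_of_nonneg_left B1 ht0.le) (by positivity)
            _ = (M ^ 2 * r) * (M * (t * Dg)) := by ring
            _ ≤ (M ^ 2 * r) * (M * (M * P)) := by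
                exact mul_le_mul_of_nonneg_left
                  (mul_le_mul_of_nonneg_left A1 hM0.le) (by positivity)
            _ = P * (M ^ 4 * r) := by ring
        · rw [div_mul_eq_mul_div, le_div_iff₀ hr]
          have h2 : P ≤ M * (t * (M * D)) := by
            calc P ≤ M * (t * Dg) := hf2
              _ ≤ M * (t * (M * D)) := by
                  exact mul_le_mul_of_nonneg_left
                    (mul_le_mul_of_nonneg_left hg2 ht0.le) hM0.le
          calc P * r ≤ (M * (t * (M * D))) * r := mul_le_mul_of_nonneg_right h2 hr.le
            _ = (t * (M ^ 2 * r)) * D := by ring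
            _ = s * D := by rw [ht_eq]
      refine ⟨fun a => f (g a), hfbij.comp hgbij, ?_, hkey⟩
      show f (g y) = x
      rw [hgy, hfx]
  -- Step B: conjugate the contraction H by ψ.
  obtain ⟨H, hHcont, hH0, hH1, hHball⟩ := hcontr
  set ψinv : X → X := Function.invFun ψ with hψinv_def
  have hleft : Function.LeftInverse ψinv ψ := Function.leftInverse_invFun hψbij.1
  have hright : Function.RightInverse ψinv ψ := Function.rightInverse_invFun hψbij.2
  have hK0 : (0 : ℝ) < s / r := by positivity
  -- ψ maps ball y r into ball x s
  have hψball : ∀ z : X, z ∈ ball y r → ψ z ∈ ball x s := by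
    intro z hz
    rw [mem_ball] at hz ⊢
    calc dist (ψ z) x = dist (ψ z) (ψ y) := by rw [hψy]
      _ ≤ s / r * dist z y := (hψd z y).2
      _ < s / r * r := (mul_lt_mul_iff_right₀ hK0).mpr hz
      _ = s := by field_simp
  -- ψinv is Lipschitz with constant M⁴r/s
  have hψinv_lip : ∀ u v : X, dist (ψinv u) (ψinv v) ≤ M ^ 4 * r / s * dist u v := by
    intro u v
    have h := (hψd (ψinv u) (ψinv v)).1
    rw [hright u, hright v] at h
    rw [div_mul_eq_mul_div, div_le_iff₀ (by positivity)] at h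
    rw [div_mul_eq_mul_div, le_div_iff₀ hs]
    nlinarith [h]
  have hψcont : Continuous ψ := by
    apply LipschitzWith.continuous (K := ⟨s / r, hK0.le⟩)
    exact LipschitzWith.of_dist_le_mul fun a b => (hψd a b).2
  have hψinv_cont : Continuous ψinv := by
    apply LipschitzWith.continuous (K := ⟨M ^ 4 * r / s, by positivity⟩)
    exact LipschitzWith.of_dist_le_mul fun a b => hψinv_lip a b
  have hxy : ψinv x = y := by rw [← hψy]; exact hleft y
  refine ⟨fun p => ψinv (H (⟨ψ p.1, hψball _ p.1.2⟩, p.2)), ?_, ?_, ?_, ?_⟩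
  · apply hψinv_cont.comp
    apply hHcont.comp
    refine Continuous.prodMk ?_ continuous_snd
    exact Continuous.subtype_mk (hψcont.comp (continuous_subtype_val.comp continuous_fst)) _
  · intro z
    simp only [hH0 ⟨ψ z, hψball _ z.2⟩]
    exact hleft z
  · intro z
    simp only [hH1 ⟨ψ z, hψball _ z.2⟩]
    exact hxy
  · intro z t
    rw [mem_ball]
    have hb := hHball ⟨ψ z, hψball _ z.2⟩ t
    rw [mem_ball] at hb
    calc dist (ψinv (H (⟨ψ z, hψball _ z.2⟩, t))) y
        = dist (ψinv (H (⟨ψ z, hψball _ z.2⟩, t))) (ψinv x) := by rw [hxy]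
      _ ≤ M ^ 4 * r / s * dist (H (⟨ψ z, hψball _ z.2⟩, t)) x := hψinv_lip _ _
      _ < M ^ 4 * r / s * (C * s) := (mul_lt_mul_iff_right₀ (by positivity)).mpr hb
      _ = C * M ^ 4 * r := by field_simp
end

section
/- Let Γ be a metric space through each point of which there passes exactly one locally rectifiable curve (up to reparameterization), and let S = Γ × ℝ with the sum metric. If g : S → S is an L-bi-Lipschitz homeomorphism, then g maps each vertical line {x} × ℝ onto a vertical line {x'} × ℝ, since bi-Lipschitz maps send locally rectifiable curves to locally rectifiable curves. -/
open Set

/-- The sum metric on `S = Γ × ℝ`. -/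
noncomputable def rugDist {Γ : Type*} [MetricSpace Γ] (p q : Γ × ℝ) : ℝ :=
  dist p.1 q.1 + |p.2 - q.2|

/-- A curve `γ : ℝ → Γ × ℝ` is locally rectifiable (for the sum metric) if it
is continuous and its partition sums over any compact interval are uniformly
bounded. -/
def LocallyRectifiable {Γ : Type*} [MetricSpace Γ] (γ : ℝ → Γ × ℝ) : Prop :=
  Continuous γ ∧ ∀ a b : ℝ, a ≤ b → ∃ C : ℝ,
    ∀ (n : ℕ) (t : Fin (n + 1) → ℝ), Monotone t → (∀ i, t i ∈ Icc a b) →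
      ∑ i : Fin n, rugDist (γ (t i.castSucc)) (γ (t i.succ)) ≤ C

lemma rugDist_self {Γ : Type*} [MetricSpace Γ] (x : Γ) (s t : ℝ) :
    rugDist (x, s) (x, t) = |s - t| := by
  simp [rugDist]

lemma dist_le_rugDist {Γ : Type*} [MetricSpace Γ] (p q : Γ × ℝ) :
    dist p q ≤ rugDist p q := by
  rw [Prod.dist_eq, rugDist, Real.dist_eq]
  exact max_le (le_add_of_nonneg_right (abs_nonneg _))
    (le_add_of_nonneg_left dist_nonneg)

/-- A Lipschitz (for `rugDist`) image of a vertical line is locally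
rectifiable. -/
lemma locallyRectifiable_of_lip {Γ : Type*} [MetricSpace Γ]
    (L : ℝ) (hL : 0 ≤ L) (f : Γ × ℝ → Γ × ℝ)
    (hf : ∀ p q, rugDist (f p) (f q) ≤ L * rugDist p q) (x : Γ) :
    LocallyRectifiable (fun t => f (x, t)) := by
  have hlip : ∀ s t : ℝ, rugDist (f (x, s)) (f (x, t)) ≤ L * |s - t| := by
    intro s t
    simpa [rugDist_self] using hf (x, s) (x, t)
  constructor
  · apply LipschitzWith.continuous (K := Real.toNNReal L)
    apply LipschitzWith.of_dist_le_mul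
    intro s t
    calc dist (f (x, s)) (f (x, t)) ≤ rugDist (f (x, s)) (f (x, t)) :=
        dist_le_rugDist _ _
      _ ≤ L * |s - t| := hlip s t
      _ ≤ (Real.toNNReal L : ℝ) * dist s t := by
          rw [Real.dist_eq, Real.coe_toNNReal _ hL]
  · intro a b hab
    refine ⟨L * (b - a), ?_⟩
    intro n t ht hmem
    have key : ∑ i : Fin n, rugDist (f (x, t i.castSucc)) (f (x, t i.succ))
        ≤ L * ∑ i : Fin n, (t i.succ - t i.castSucc) := by
      rw [Finset.mul_sum]
      apply Finset.sum_le_sum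
      intro i _
      have := hlip (t i.castSucc) (t i.succ)
      rwa [abs_sub_comm, abs_of_nonneg (sub_nonneg.mpr (ht (Fin.castSucc_le_succ i)))] at this
    refine key.trans ?_
    have htel : ∑ i : Fin n, (t i.succ - t i.castSucc) = t (Fin.last n) - t 0 := by
      set u : ℕ → ℝ := fun i => t ⟨min i n, by omega⟩ with hu
      have h1 : ∑ i : Fin n, (t i.succ - t i.castSucc)
          = ∑ i ∈ Finset.range n, (u (i + 1) - u i) := by
        rw [← Fin.sum_univ_eq_sum_range]
        apply Finset.sum_congr rfl
        intro i _
        have h2 : min ((i : ℕ) + 1) n = (i : ℕ) + 1 := Nat.min_eq_left i.isLt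
        have h3 : min (i : ℕ) n = (i : ℕ) := Nat.min_eq_left (le_of_lt i.isLt)
        congr 1 <;> · apply congrArg t; apply Fin.ext; simp [hu, h2, h3, Fin.succ, Fin.castSucc]
      rw [h1, Finset.sum_range_sub]
      have : u n = t (Fin.last n) := by
        apply congrArg t; apply Fin.ext; simp [hu, Fin.last]
      have h0 : u 0 = t 0 := by
        apply congrArg t; apply Fin.ext; simp [hu]
      rw [this, h0]
    rw [htel]
    have h0 := hmem 0
    have hl := hmem (Fin.last n)
    have : t (Fin.last n) - t 0 ≤ b - a := by
      have := h0.1; have := hl.2; simp only [mem_Icc] at h0 hl; linarith [h0.1, hl.2]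
    exact mul_le_mul_of_nonneg_left this hL

/-- If every locally rectifiable curve in `S = Γ × ℝ` is contained in a
vertical line, then any `L`-bi-Lipschitz self-homeomorphism of `S` (for the
sum metric) maps each vertical line `{x} × ℝ` onto a vertical line
`{x'} × ℝ`. -/
theorem biLipschitz_maps_vertical_lines_to_vertical_lines
    {Γ : Type*} [MetricSpace Γ]
    (hΓ : ∀ γ : ℝ → Γ × ℝ, LocallyRectifiable γ →
      ∀ s t : ℝ, (γ s).1 = (γ t).1)
    (L : ℝ) (hL : 1 ≤ L)
    (g : Γ × ℝ → Γ × ℝ) (hg : Function.Bijective g)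
    (hbil : ∀ p q : Γ × ℝ,
      L⁻¹ * rugDist p q ≤ rugDist (g p) (g q) ∧ rugDist (g p) (g q) ≤ L * rugDist p q) :
    ∀ x : Γ, ∃ x' : Γ, g '' {p : Γ × ℝ | p.1 = x} = {p : Γ × ℝ | p.1 = x'} := by
  intro x
  have hL0 : (0 : ℝ) < L := lt_of_lt_of_le one_pos hL
  set e := Equiv.ofBijective g hg with he
  have hge : ∀ p, g p = e p := fun p => rfl
  -- the inverse map
  set g' : Γ × ℝ → Γ × ℝ := ⇑e.symm with hg'
  have hgg' : ∀ p, g (g' p) = p := fun p => e.apply_symm_apply p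
  have hg'g : ∀ p, g' (g p) = p := fun p => e.symm_apply_apply p
  -- Lipschitz bounds
  have hlipg : ∀ p q, rugDist (g p) (g q) ≤ L * rugDist p q := fun p q => (hbil p q).2
  have hlipg' : ∀ p q, rugDist (g' p) (g' q) ≤ L * rugDist p q := by
    intro p q
    have := (hbil (g' p) (g' q)).1
    rw [hgg', hgg'] at this
    calc rugDist (g' p) (g' q) = L * (L⁻¹ * rugDist (g' p) (g' q)) := by
          field_simp
      _ ≤ L * rugDist p q := mul_le_mul_of_nonneg_left this hL0.le
  set x' := (g (x, 0)).1 with hx'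
  have hc : ∀ t : ℝ, (g (x, t)).1 = x' := by
    intro t
    exact hΓ (fun s => g (x, s))
      (locallyRectifiable_of_lip L hL0.le g hlipg x) t 0
  have hc' : ∀ t : ℝ, (g' (x', t)).1 = x := by
    intro t
    have h1 : g (x, 0) = (x', (g (x, 0)).2) := Prod.ext rfl rfl
    have h2 : g' (x', (g (x, 0)).2) = (x, 0) := by rw [← h1, hg'g]
    have := hΓ (fun s => g' (x', s))
      (locallyRectifiable_of_lip L hL0.le g' hlipg' x') t ((g (x, 0)).2)
    rw [this, h2]
  refine ⟨x', ?_⟩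
  ext q
  constructor
  · rintro ⟨p, hp, rfl⟩
    simp only [mem_setOf_eq] at hp ⊢
    have : p = (x, p.2) := Prod.ext hp rfl
    rw [this]
    exact hc p.2
  · intro hq
    simp only [mem_setOf_eq] at hq
    refine ⟨g' q, ?_, hgg' q⟩
    simp only [mem_setOf_eq]
    have : q = (x', q.2) := Prod.ext hq rfl
    rw [this]
    exact hc' q.2
end
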